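/- arXiv:1302.1808 — 5 statements merged into one kernel-verified Lean document; each statement's English description precedes it below -/
import Mathlib

section
/- Fix an integer k ≥ 3, α ∈ (0,1), ε > 0, and set K = (4+ε)·(k!)²/α^{k−1} and p_n = (K·log n / n^{k−1})^{1/k}. Then for every integer l with 1 ≤ l ≤ k−1 and every δ > 0 there is a constant C such that for all n and all integers i with 1 ≤ i ≤ (k−α)·n, the probability that there exist 3k pairwise disjoint l-element subsets of 𝒜 each summing to i is at most C·n^{−3+δ}; i.e., P(Y*_{l,n}(i) ≥ 3k) ≤ C·n^{−3+δ}. -/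
/-!
If `Y*_{l,n}(i) ≥ 3k`, some family of `3k` pairwise disjoint `l`-sets summing to `i` lies
inside `𝒜`; these cover `3kl` points, so each family is present with probability `p^{3kl}`.
An `l`-set with prescribed sum is determined by the `l - 1` elements below its maximum, so
there are at most `(n+1)^{l-1}` such sets and at most `(n+1)^{3k(l-1)}` families. The union
bound gives `(n+1)^{3k(l-1)} (K log n / n^{k-1})^{3l}`, and `l < k` makes the power of `n`
at most `-3`; the factor `(log n)^{3l}` is absorbed into `n^δ`.
-/

open MeasureTheory Filter
open scoped ENNReal

/-- Bernoulli PMF on `Bool` with success probability `p` (clamped to `[0,1]`). -/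
noncomputable def bern (p : ℝ) : PMF Bool :=
  PMF.bernoulli (min (Real.toNNReal p) 1) (min_le_right _ _)

/-- The product Bernoulli measure on subsets of `{0, …, n}` (encoded as indicator
functions `Fin (n+1) → Bool`): each element is included independently w.p. `p`. -/
noncomputable def randSet (n : ℕ) (p : ℝ) : Measure (Fin (n + 1) → Bool) :=
  Measure.pi fun _ => (bern p).toMeasure

def repFinsets (n k j : ℕ) (ω : Fin (n + 1) → Bool) : Finset (Finset (Fin (n + 1))) :=
  Finset.univ.filter fun S => S.card = k ∧ (∑ i ∈ S, (i : ℕ)) = j ∧ ∀ i ∈ S, ω i = true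

def Y (n k j : ℕ) (ω : Fin (n + 1) → Bool) : ℕ := (repFinsets n k j ω).card

open scoped Classical in
/-- `Ystar n k j ω` is `Y*_{k,n}(j)` for the random set `ω`. -/
noncomputable def Ystar (n k j : ℕ) (ω : Fin (n + 1) → Bool) : ℕ :=
  (Finset.univ.filter fun 𝒞 : Finset (Finset (Fin (n + 1))) =>
    (∀ S ∈ 𝒞, S ∈ repFinsets n k j ω) ∧
      (𝒞 : Set (Finset (Fin (n + 1)))).Pairwise fun S T => Disjoint S T).sup Finset.card

open Finset

section SumOfSubsets

variable {α M : Type*} [LinearOrder α] [AddCancelCommMonoid M] {f : α → M}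

lemma Finset.eq_of_erase_max'_eq_of_sum_eq (hf : f.Injective) {S T : Finset α}
    (hS : S.Nonempty) (hT : T.Nonempty) (herase : S.erase (S.max' hS) = T.erase (T.max' hT))
    (hsum : ∑ x ∈ S, f x = ∑ x ∈ T, f x) : S = T := by
  have hmax : S.max' hS = T.max' hT := by
    rw [← add_sum_erase S f (S.max'_mem hS), ← add_sum_erase T f (T.max'_mem hT), herase]
      at hsum
    exact hf (add_right_cancel hsum)
  rw [← insert_erase (S.max'_mem hS), ← insert_erase (T.max'_mem hT), herase, hmax]

lemma Finset.card_filter_card_eq_sum_eq_le_choose [Fintype α] [DecidableEq M]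
    (hf : f.Injective) {l : ℕ} (hl : 0 < l) (m : M) :
    #{S : Finset α | #S = l ∧ ∑ x ∈ S, f x = m} ≤ (Fintype.card α).choose (l - 1) := by
  have hne : ∀ S ∈ ({S : Finset α | #S = l ∧ ∑ x ∈ S, f x = m} : Finset _), S.Nonempty :=
    fun S hS => card_pos.1 ((mem_filter.1 hS).2.1 ▸ hl)
  calc _ ≤ #(powersetCard (l - 1) (univ : Finset α)) := by
        refine card_le_card_of_injOn
          (fun S => if h : S.Nonempty then S.erase (S.max' h) else ∅) (fun S hS => ?_) ?_
        · dsimp only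
          rw [mem_coe, mem_powersetCard, dif_pos (hne S hS),
            card_erase_of_mem (S.max'_mem _), (mem_filter.1 hS).2.1]
          exact ⟨subset_univ _, rfl⟩
        · intro S hS T hT hST
          simp only [dif_pos (hne S hS), dif_pos (hne T hT)] at hST
          exact eq_of_erase_max'_eq_of_sum_eq hf _ _ hST
            (((mem_filter.1 hS).2.2).trans ((mem_filter.1 hT).2.2).symm)
    _ = _ := by rw [card_powersetCard, card_univ]

end SumOfSubsets

def sumReps (n l i : ℕ) : Finset (Finset (Fin (n + 1))) :=
  {S | #S = l ∧ ∑ j ∈ S, (j : ℕ) = i}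

lemma card_sumReps_le (n : ℕ) {l : ℕ} (hl : 0 < l) (i : ℕ) :
    #(sumReps n l i) ≤ (n + 1) ^ (l - 1) :=
  calc #(sumReps n l i) ≤ (n + 1).choose (l - 1) := by
        simpa [sumReps] using card_filter_card_eq_sum_eq_le_choose Fin.val_injective hl i
    _ ≤ (n + 1) ^ (l - 1) := Nat.choose_le_pow _ _

lemma repFinsets_subset_sumReps (n l i : ℕ) (ω : Fin (n + 1) → Bool) :
    repFinsets n l i ω ⊆ sumReps n l i := fun S hS => by
  simp only [repFinsets, sumReps, mem_filter] at hS ⊢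
  exact ⟨hS.1, hS.2.1, hS.2.2.1⟩

lemma exists_pairwiseDisjoint_of_le_Ystar {n l i m : ℕ} {ω : Fin (n + 1) → Bool}
    (h : m ≤ Ystar n l i ω) : ∃ 𝒞 ⊆ repFinsets n l i ω,
      (𝒞 : Set (Finset (Fin (n + 1)))).PairwiseDisjoint id ∧ #𝒞 = m := by
  classical
  obtain ⟨𝒞₀, h𝒞₀, hsup⟩ := exists_mem_eq_sup
    (univ.filter fun 𝒞 : Finset (Finset (Fin (n + 1))) =>
      (∀ S ∈ 𝒞, S ∈ repFinsets n l i ω) ∧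
        (𝒞 : Set (Finset (Fin (n + 1)))).Pairwise fun S T => Disjoint S T)
    ⟨∅, by simp⟩ card
  rw [Ystar, hsup] at h
  obtain ⟨-, hrep, hdisj⟩ := mem_filter.1 h𝒞₀
  obtain ⟨𝒞, h𝒞₀, rfl⟩ := exists_subset_card_eq h
  exact ⟨𝒞, h𝒞₀.trans hrep, hdisj.mono (coe_subset.2 h𝒞₀), rfl⟩

lemma randSet_pi_true (n : ℕ) (p : ℝ) (U : Finset (Fin (n + 1))) :
    randSet n p ((U : Set (Fin (n + 1))).pi fun _ => {true}) = min (ENNReal.ofReal p) 1 ^ #U := by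
  rw [randSet, Measure.pi_pi_finset, prod_const]
  congr 1
  rw [PMF.toMeasure_apply_singleton _ _ (measurableSet_singleton _)]
  exact ENNReal.coe_min _ _

lemma randSet_setOf_le_Ystar_le (n l i m : ℕ) (p : ℝ) :
    randSet n p {ω | m ≤ Ystar n l i ω} ≤
      (#(sumReps n l i) : ℝ≥0∞) ^ m * ENNReal.ofReal p ^ (m * l) := by
  classical
  set 𝔉 : Finset (Finset (Finset (Fin (n + 1)))) := {𝒞 ∈ (sumReps n l i).powersetCard m |
    (𝒞 : Set (Finset (Fin (n + 1)))).PairwiseDisjoint id}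
  have hcover : {ω | m ≤ Ystar n l i ω} ⊆
      ⋃ 𝒞 ∈ 𝔉, ((𝒞.biUnion id : Finset _) : Set (Fin (n + 1))).pi fun _ => {true} := by
    intro ω hω
    obtain ⟨𝒞, hsub, hdisj, hcard⟩ := exists_pairwiseDisjoint_of_le_Ystar hω
    refine Set.mem_biUnion (x := 𝒞) ?_ fun j hj => ?_
    · exact mem_filter.2
        ⟨mem_powersetCard.2 ⟨hsub.trans (repFinsets_subset_sumReps ..), hcard⟩, hdisj⟩
    · obtain ⟨S, hS, hjS⟩ := mem_biUnion.1 hj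
      have := (mem_filter.1 (hsub hS)).2.2.2 j hjS
      simpa
  have hcard : ∀ 𝒞 ∈ 𝔉, #(𝒞.biUnion id) = m * l := by
    intro 𝒞 h𝒞
    obtain ⟨h𝒞, hdisj⟩ := mem_filter.1 h𝒞
    obtain ⟨hsub, hm⟩ := mem_powersetCard.1 h𝒞
    rw [card_biUnion hdisj]
    simp only [id]
    rw [sum_congr rfl fun S hS => (mem_filter.1 (hsub hS)).2.1, sum_const, hm, smul_eq_mul]
  calc randSet n p {ω | m ≤ Ystar n l i ω}
      ≤ ∑ 𝒞 ∈ 𝔉,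
          randSet n p (((𝒞.biUnion id : Finset _) : Set (Fin (n + 1))).pi fun _ => {true}) :=
        (measure_mono hcover).trans (measure_biUnion_finset_le _ _)
    _ ≤ ∑ 𝒞 ∈ 𝔉, ENNReal.ofReal p ^ (m * l) := sum_le_sum fun 𝒞 h𝒞 => by
        rw [randSet_pi_true, hcard 𝒞 h𝒞]
        gcongr
        exact min_le_left _ _
    _ = #𝔉 * ENNReal.ofReal p ^ (m * l) := by rw [sum_const, nsmul_eq_mul]
    _ ≤ _ := by
        gcongr
        exact_mod_cast (card_filter_le _ _).trans
          ((card_powersetCard _ _).trans_le (Nat.choose_le_pow _ _))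

lemma randSet_rpow_setOf_le_Ystar_le (n : ℕ) {k l : ℕ} (hk : k ≠ 0) (hl : 0 < l) (i m : ℕ)
    {y : ℝ} (hy : 0 ≤ y) :
    randSet n (y ^ ((1 : ℝ) / k)) {ω | m * k ≤ Ystar n l i ω} ≤
      ENNReal.ofReal (((n : ℝ) + 1) ^ ((l - 1) * (m * k)) * y ^ (m * l)) := by
  have hp : (y ^ ((1 : ℝ) / k)) ^ (m * k * l) = y ^ (m * l) := by
    rw [one_div, mul_right_comm, mul_comm (m * l) k, pow_mul, Real.rpow_inv_natCast_pow hy hk]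
  have hcard : (#(sumReps n l i) : ℝ≥0∞) ^ (m * k) ≤
      ENNReal.ofReal (((n : ℝ) + 1) ^ ((l - 1) * (m * k))) := by
    rw [show ((n : ℝ) + 1) ^ ((l - 1) * (m * k)) = (((n + 1) ^ (l - 1)) ^ (m * k) : ℕ) by
      push_cast; ring, ENNReal.ofReal_natCast]
    exact_mod_cast Nat.pow_le_pow_left (card_sumReps_le n hl i) _
  calc _ ≤ (#(sumReps n l i) : ℝ≥0∞) ^ (m * k) *
        ENNReal.ofReal (y ^ ((1 : ℝ) / k)) ^ (m * k * l) :=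
        randSet_setOf_le_Ystar_le n l i (m * k) _
    _ ≤ _ := by
        rw [← ENNReal.ofReal_pow (by positivity), hp, ENNReal.ofReal_mul (by positivity)]
        gcongr

lemma Real.pow_log_le_inv_pow_mul_rpow {x ε : ℝ} (hx : 1 ≤ x) (hε : 0 < ε) (c : ℕ) :
    Real.log x ^ c ≤ ε⁻¹ ^ c * x ^ (ε * c) :=
  calc Real.log x ^ c ≤ (x ^ ε / ε) ^ c :=
        pow_le_pow_left₀ (Real.log_nonneg hx) (Real.log_le_rpow_div (by linarith) hε) c
    _ = ε⁻¹ ^ c * x ^ (ε * c) := by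
        rw [div_pow, Real.rpow_mul (by linarith), Real.rpow_natCast]
        ring

lemma exists_add_one_pow_mul_log_div_pow_le {K δ : ℝ} (hK : 0 ≤ K) (hδ : 0 < δ)
    {a b c e : ℕ} (hc : 0 < c) (habce : a + e ≤ b * c) :
    ∃ C : ℝ, ∀ x : ℝ, 1 ≤ x →
      (x + 1) ^ a * (K * Real.log x / x ^ b) ^ c ≤ C * x ^ (-(e : ℝ) + δ) := by
  refine ⟨2 ^ a * K ^ c * (δ / c)⁻¹ ^ c, fun x hx => ?_⟩
  have hx0 : 0 < x := by linarith
  have hlog0 := Real.log_nonneg hx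
  have hlog := Real.pow_log_le_inv_pow_mul_rpow hx (div_pos hδ (Nat.cast_pos.2 hc)) c
  rw [div_mul_cancel₀ _ (Nat.cast_ne_zero.2 hc.ne')] at hlog
  have hpow : x ^ a * x ^ e ≤ x ^ (b * c) := by
    rw [← pow_add]
    exact pow_le_pow_right₀ hx habce
  calc (x + 1) ^ a * (K * Real.log x / x ^ b) ^ c
      = (x + 1) ^ a * K ^ c * Real.log x ^ c / x ^ (b * c) := by
        rw [div_pow, mul_pow, ← pow_mul]
        ring
    _ ≤ (2 * x) ^ a * K ^ c * ((δ / c)⁻¹ ^ c * x ^ δ) / x ^ (b * c) := by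
        gcongr
        linarith
    _ = 2 ^ a * K ^ c * (δ / c)⁻¹ ^ c * (x ^ δ * (x ^ a / x ^ (b * c))) := by ring
    _ ≤ 2 ^ a * K ^ c * (δ / c)⁻¹ ^ c * (x ^ δ * (x ^ e)⁻¹) := by
        gcongr
        rw [div_le_iff₀ (by positivity), ← div_eq_inv_mul, le_div_iff₀ (by positivity)]
        exact hpow
    _ = 2 ^ a * K ^ c * (δ / c)⁻¹ ^ c * x ^ (-(e : ℝ) + δ) := by
        rw [Real.rpow_add hx0, Real.rpow_neg hx0.le, Real.rpow_natCast, mul_comm (x ^ δ)]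

theorem disjoint_reps_bound_general (k : ℕ) (α ε : ℝ)
    (hα0 : 0 < α) (hε : 0 < ε)
    (l : ℕ) (hl1 : 1 ≤ l) (hl2 : l ≤ k - 1) (δ : ℝ) (hδ : 0 < δ) :
    ∃ C : ℝ, ∀ n : ℕ, ∀ i : ℕ, 1 ≤ i → (i : ℝ) ≤ ((k : ℝ) - α) * n →
      randSet n (((4 + ε) * (k.factorial : ℝ) ^ 2 / α ^ (k - 1) * Real.log n /
            (n : ℝ) ^ (k - 1)) ^ ((1 : ℝ) / k))
          {ω | 3 * k ≤ Ystar n l i ω} ≤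
        ENNReal.ofReal (C * (n : ℝ) ^ (-3 + δ)) := by
  set K := (4 + ε) * (k.factorial : ℝ) ^ 2 / α ^ (k - 1)
  have hexp : (l - 1) * (3 * k) + 3 ≤ (k - 1) * (3 * l) := by
    have hlk : (l : ℤ) + 1 ≤ k := by omega
    zify [hl1, (by omega : 1 ≤ k)]
    nlinarith
  obtain ⟨C, hC⟩ := exists_add_one_pow_mul_log_div_pow_le (by positivity : 0 ≤ K) hδ
    (by omega : 0 < 3 * l) hexp
  refine ⟨C, fun n i hi1 hi2 => ?_⟩
  have hn : (1 : ℝ) ≤ n := by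
    rcases n.eq_zero_or_pos with rfl | hn
    · norm_num at hi2
      omega
    · exact_mod_cast hn
  have hy : 0 ≤ K * Real.log n / (n : ℝ) ^ (k - 1) := by
    have := Real.log_nonneg hn
    positivity
  exact (randSet_rpow_setOf_le_Ystar_le n (by omega) hl1 i 3 hy).trans
    (ENNReal.ofReal_le_ofReal (by exact_mod_cast hC n hn))

/-- disjointness-lemma consequence. For fixed `k ≥ 3`, `α ∈ (0,1)`,
`ε > 0`, `K = (4+ε)(k!)²/α^{k-1}`, `p_n = (K·log n/n^{k-1})^{1/k}`: for every
`1 ≤ l ≤ k-1` and `δ > 0` there is a constant `C` with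
`P(Y*_{l,n}(i) ≥ 3k) ≤ C·n^{-3+δ}` for all `n` and all `1 ≤ i ≤ (k-α)n`. -/
theorem disjoint_reps_bound (k : ℕ) (hk : 3 ≤ k) (α ε : ℝ)
    (hα0 : 0 < α) (hα1 : α < 1) (hε : 0 < ε)
    (l : ℕ) (hl1 : 1 ≤ l) (hl2 : l ≤ k - 1) (δ : ℝ) (hδ : 0 < δ) :
    ∃ C : ℝ, ∀ n : ℕ, ∀ i : ℕ, 1 ≤ i → (i : ℝ) ≤ ((k : ℝ) - α) * n →
      randSet n (((4 + ε) * (k.factorial : ℝ) ^ 2 / α ^ (k - 1) * Real.log n /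
            (n : ℝ) ^ (k - 1)) ^ ((1 : ℝ) / k))
          {ω | 3 * k ≤ Ystar n l i ω} ≤
        ENNReal.ofReal (C * (n : ℝ) ^ (-3 + δ)) :=
  disjoint_reps_bound_general k α ε hα0 hε l hl1 hl2 δ hδ
end

section
/- (Lemma 3.2) Fix an integer k ≥ 3, α ∈ (0,1), ε > 0, and set K = (4+ε)·(k!)²/α^{k−1} and p_n = (K·log n / n^{k−1})^{1/k}. Then for every δ > 0 there is a constant C such that for all n and all integers i with 1 ≤ i ≤ (k−α)·n, P(Y_{k−1,n}(i) ≥ (3k−1)^{k−1}·(k−1)!) ≤ C·n^{−3+δ}. -/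
open MeasureTheory Filter
open scoped ENNReal

/-!
If `Y_{k-1,n}(i) ≥ (3k-1)^{k-1} (k-1)!`, the family of `(k-1)`-sets summing to `i` contains a
sunflower with `r = 3k` petals (Erdős–Rado). A sunflower with a core of size `c` occupies
`c + r(k-1-c)` points, and since the sum is fixed each petal is determined by all but one of its
elements, so there are at most `n^{c + r(k-2-c)}` such sunflowers. A union bound gives
`P ≤ ∑_c n^{c + r(k-2-c)} p^{c + r(k-1-c)}`, and as `p^k = n^{1-k + o(1)}` each term is
`n^{(c - r(c+1))/k + o(1)} ≤ n^{-3+δ}`.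
-/

open Finset
open scoped Nat

section Sunflower

variable {β M : Type*} [AddCancelCommMonoid M] {w : β → M}

lemma card_le_one_of_sum_eq (hw : Function.Injective w) {F : Finset (Finset β)}
    (hcard : ∀ S ∈ F, #S = 1) (hsum : ∀ S ∈ F, ∀ T ∈ F, ∑ x ∈ S, w x = ∑ x ∈ T, w x) :
    #F ≤ 1 := by
  refine card_le_one.2 fun S hS T hT => ?_
  obtain ⟨a, rfl⟩ := card_eq_one.1 (hcard S hS)
  obtain ⟨b, rfl⟩ := card_eq_one.1 (hcard T hT)
  simpa using hw (by simpa using hsum _ hS _ hT)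

variable [DecidableEq β]

lemma eq_of_erase_eq_of_sum_eq (hw : Function.Injective w) {S T : Finset β} {a b : β}
    (ha : a ∈ S) (hb : b ∈ T) (h : S.erase a = T.erase b)
    (hsum : ∑ x ∈ S, w x = ∑ x ∈ T, w x) : S = T := by
  rw [← add_sum_erase S w ha, ← add_sum_erase T w hb, h, add_left_inj] at hsum
  rw [← insert_erase ha, ← insert_erase hb, h, hw hsum]

lemma card_memberSubfamily (F : Finset (Finset β)) (x : β) :
    #(F.memberSubfamily x) = #{S ∈ F | x ∈ S} := by
  rw [← image_insert_memberSubfamily, card_image_of_injOn]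
  intro S hS T hT h
  simpa [erase_insert (mem_memberSubfamily.1 hS).2, erase_insert (mem_memberSubfamily.1 hT).2]
    using congrArg (erase · x) h

lemma card_eq_of_mem_memberSubfamily {F : Finset (Finset β)} {s : ℕ} {x : β}
    (hcard : ∀ S ∈ F, #S = s + 1) {S : Finset β} (hS : S ∈ F.memberSubfamily x) : #S = s := by
  rw [mem_memberSubfamily] at hS
  simpa [card_insert_of_notMem hS.2] using hcard _ hS.1

lemma sum_eq_of_mem_memberSubfamily {F : Finset (Finset β)} {x : β}
    (hsum : ∀ S ∈ F, ∀ T ∈ F, ∑ y ∈ S, w y = ∑ y ∈ T, w y) {S T : Finset β}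
    (hS : S ∈ F.memberSubfamily x) (hT : T ∈ F.memberSubfamily x) :
    ∑ y ∈ S, w y = ∑ y ∈ T, w y := by
  rw [mem_memberSubfamily] at hS hT
  simpa [sum_insert hS.2, sum_insert hT.2] using hsum _ hS.1 _ hT.1

lemma exists_pairwiseDisjoint_forall_not_disjoint (F : Finset (Finset β))
    (hF : ∀ S ∈ F, S.Nonempty) :
    ∃ D ⊆ F, (D : Set (Finset β)).PairwiseDisjoint id ∧ ∀ S ∈ F, ∃ T ∈ D, ¬Disjoint S T := by
  induction F using Finset.induction_on with
  | empty => exact ⟨∅, subset_refl _, by simp, by simp⟩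
  | insert S F _ ih =>
    obtain ⟨D, hDF, hDdisj, hDmeet⟩ := ih fun T hT => hF T (mem_insert_of_mem hT)
    by_cases hS : ∃ T ∈ D, ¬Disjoint S T
    · refine ⟨D, hDF.trans (subset_insert _ _), hDdisj, ?_⟩
      simpa only [forall_mem_insert] using ⟨hS, hDmeet⟩
    · push Not at hS
      refine ⟨insert S D, insert_subset_insert _ hDF, ?_, ?_⟩
      · rw [coe_insert]
        exact hDdisj.insert fun T hT _ => hS T hT
      · simp only [forall_mem_insert]
        refine ⟨⟨S, mem_insert_self _ _, ?_⟩, fun T hT => ?_⟩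
        · simpa using (hF S (mem_insert_self _ _)).ne_empty
        · obtain ⟨U, hU, hTU⟩ := hDmeet T hT
          exact ⟨U, mem_insert_of_mem hU, hTU⟩

lemma exists_le_card_filter_mem {F : Finset (Finset β)} {U : Finset β} {m : ℕ}
    (hU : ∀ S ∈ F, ∃ x ∈ U, x ∈ S) (hcard : #U * (m - 1) < #F) :
    ∃ x ∈ U, m ≤ #{S ∈ F | x ∈ S} := by
  have hcover : #F ≤ ∑ x ∈ U, #{S ∈ F | x ∈ S} := by
    refine (card_le_card fun S hS => ?_).trans card_biUnion_le
    obtain ⟨x, hxU, hxS⟩ := hU S hS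
    exact mem_biUnion.2 ⟨x, hxU, mem_filter.2 ⟨hS, hxS⟩⟩
  obtain ⟨x, hxU, hx⟩ := exists_lt_of_sum_lt (s := U) (f := fun _ => m - 1)
    (by simpa using hcard.trans_le hcover)
  exact ⟨x, hxU, by omega⟩

lemma exists_pairwiseDisjoint_or_exists_le_card_filter_mem {F : Finset (Finset β)} {s r m : ℕ}
    (hs : 1 ≤ s) (hcard : ∀ S ∈ F, #S = s) (hF : (r - 1) * s * (m - 1) < #F) :
    (∃ P ⊆ F, #P = r ∧ (P : Set (Finset β)).PairwiseDisjoint id) ∨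
      ∃ x, m ≤ #{S ∈ F | x ∈ S} := by
  obtain ⟨D, hDF, hDdisj, hDmeet⟩ := exists_pairwiseDisjoint_forall_not_disjoint F
    fun S hS => card_pos.1 (by rw [hcard S hS]; omega)
  by_cases hDr : r ≤ #D
  · obtain ⟨P, hPD, hPr⟩ := exists_subset_card_eq hDr
    exact Or.inl ⟨P, hPD.trans hDF, hPr, hDdisj.subset (coe_subset.2 hPD)⟩
  have hmeet : ∀ S ∈ F, ∃ y ∈ D.biUnion id, y ∈ S := fun S hS => by
    obtain ⟨T, hT, hST⟩ := hDmeet S hS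
    obtain ⟨y, hyS, hyT⟩ := not_disjoint_iff.1 hST
    exact ⟨y, mem_biUnion.2 ⟨T, hT, hyT⟩, hyS⟩
  have hU : #(D.biUnion id) ≤ (r - 1) * s :=
    calc #(D.biUnion id) ≤ #D • s :=
          card_biUnion_le.trans (sum_le_card_nsmul _ _ _ fun T hT => (hcard T (hDF hT)).le)
      _ ≤ (r - 1) * s := Nat.mul_le_mul_right _ (by omega)
  obtain ⟨x, -, hx⟩ := exists_le_card_filter_mem hmeet ((Nat.mul_le_mul_right _ hU).trans_lt hF)
  exact Or.inr ⟨x, hx⟩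

def IsSunflowerIn (F : Finset (Finset β)) (C : Finset β) (P : Finset (Finset β)) : Prop :=
  (∀ Q ∈ P, Disjoint C Q ∧ C ∪ Q ∈ F) ∧ (P : Set (Finset β)).PairwiseDisjoint id

lemma IsSunflowerIn.mono {F G : Finset (Finset β)} {C : Finset β} {P : Finset (Finset β)}
    (h : IsSunflowerIn F C P) (hFG : F ⊆ G) : IsSunflowerIn G C P :=
  ⟨fun Q hQ => ⟨(h.1 Q hQ).1, hFG (h.1 Q hQ).2⟩, h.2⟩

lemma IsSunflowerIn.insert_of_memberSubfamily {F : Finset (Finset β)} {x : β} {C : Finset β}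
    {P : Finset (Finset β)} (h : IsSunflowerIn (F.memberSubfamily x) C P) :
    IsSunflowerIn F (insert x C) P := by
  refine ⟨fun Q hQ => ?_, h.2⟩
  obtain ⟨hCQ, hmem⟩ := h.1 Q hQ
  rw [mem_memberSubfamily, mem_union, not_or] at hmem
  exact ⟨disjoint_insert_left.2 ⟨hmem.2.2, hCQ⟩, by rw [insert_union]; exact hmem.1⟩

/-- Erdős–Rado for a uniform family with constant sum: equal sums leave at most one singleton,
so the bound `(r - 1) ^ s * s !` need not be exceeded. -/
theorem exists_isSunflowerIn_of_sum_eq (hw : Function.Injective w) {s r : ℕ} (hs : 1 ≤ s)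
    (hr : 3 ≤ r) {F : Finset (Finset β)} (hcard : ∀ S ∈ F, #S = s)
    (hsum : ∀ S ∈ F, ∀ T ∈ F, ∑ x ∈ S, w x = ∑ x ∈ T, w x) (hF : (r - 1) ^ s * s ! ≤ #F) :
    ∃ C P, #P = r ∧ IsSunflowerIn F C P := by
  induction s generalizing F with
  | zero => omega
  | succ s ih =>
  obtain rfl | hs := Nat.eq_zero_or_pos s
  · have := card_le_one_of_sum_eq hw hcard hsum
    simp only [zero_add, pow_one, Nat.factorial_one, mul_one] at hF
    omega
  have hm : 0 < (r - 1) ^ s * s ! := Nat.mul_pos (Nat.pow_pos (by omega)) s.factorial_pos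
  have hsmall : (r - 1) * (s + 1) * ((r - 1) ^ s * (s !) - 1) < #F :=
    calc (r - 1) * (s + 1) * ((r - 1) ^ s * (s !) - 1)
        < (r - 1) * (s + 1) * ((r - 1) ^ s * s !) :=
          Nat.mul_lt_mul_of_pos_left (Nat.sub_lt hm one_pos) (Nat.mul_pos (by omega) (by omega))
      _ = (r - 1) ^ (s + 1) * (s + 1) ! := by rw [Nat.factorial_succ]; ring
      _ ≤ #F := hF
  rcases exists_pairwiseDisjoint_or_exists_le_card_filter_mem (by omega) hcard hsmall with
    ⟨P, hPF, hPr, hPdisj⟩ | ⟨x, hx⟩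
  · exact ⟨∅, P, hPr, fun Q hQ => ⟨disjoint_empty_left _, by simpa using hPF hQ⟩, hPdisj⟩
  · obtain ⟨C, P, hPr, hCP⟩ := ih hs (fun S hS => card_eq_of_mem_memberSubfamily hcard hS)
      (fun S hS T hT => sum_eq_of_mem_memberSubfamily hsum hS hT)
      ((card_memberSubfamily F x).symm ▸ hx)
    exact ⟨insert x C, P, hPr, hCP.insert_of_memberSubfamily⟩

end Sunflower

section EraseSup

variable {β M : Type*} [LinearOrder β] [OrderBot β] [AddCancelCommMonoid M] {w : β → M}

lemma sup_id_mem {Q : Finset β} (hQ : Q.Nonempty) : Q.sup id ∈ Q := by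
  simpa using sup_mem_of_nonempty (f := id) hQ

lemma injOn_erase_sup (hw : Function.Injective w) (t : M) :
    Set.InjOn (fun Q : Finset β => Q.erase (Q.sup id)) {Q | Q.Nonempty ∧ ∑ x ∈ Q, w x = t} :=
  fun _ h₁ _ h₂ h => eq_of_erase_eq_of_sum_eq hw (sup_id_mem h₁.1) (sup_id_mem h₂.1) h
    (h₁.2.trans h₂.2.symm)

lemma injOn_image_erase_sup (hw : Function.Injective w) (t : M) :
    Set.InjOn (fun P : Finset (Finset β) => P.image fun Q => Q.erase (Q.sup id))
      {P | ∀ Q ∈ P, Q.Nonempty ∧ ∑ x ∈ Q, w x = t} := by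
  intro P hP P' hP' h
  rw [← coe_inj, ← ((injOn_erase_sup hw t).image_eq_image_iff (fun Q hQ => hP Q hQ)
    (fun Q hQ => hP' Q hQ)), ← coe_image, ← coe_image]
  exact congrArg _ h

end EraseSup

section Configurations

variable {n : ℕ}

lemma mem_repFinsets {k j : ℕ} {ω : Fin (n + 1) → Bool} {S : Finset (Fin (n + 1))} :
    S ∈ repFinsets n k j ω ↔ #S = k ∧ ∑ x ∈ S, (x : ℕ) = j ∧ ∀ x ∈ S, ω x = true := by
  simp [repFinsets]

lemma repFinsets_subset (s i : ℕ) (ω : Fin (n + 1) → Bool) :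
    repFinsets n s i ω ⊆ repFinsets n s i fun _ => true := by
  intro S
  simp only [mem_repFinsets, implies_true, and_true]
  exact fun h => ⟨h.1, h.2.1⟩

lemma IsSunflowerIn.card_add_card {s i : ℕ} {ω : Fin (n + 1) → Bool} {C : Finset (Fin (n + 1))}
    {P : Finset (Finset (Fin (n + 1)))} (h : IsSunflowerIn (repFinsets n s i ω) C P)
    {Q : Finset (Fin (n + 1))} (hQ : Q ∈ P) :
    #C + #Q = s ∧ ∑ x ∈ C, (x : ℕ) + ∑ x ∈ Q, (x : ℕ) = i := by
  obtain ⟨hCQ, hmem⟩ := h.1 Q hQ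
  rw [mem_repFinsets] at hmem
  rw [← card_union_of_disjoint hCQ, ← sum_union hCQ]
  exact ⟨hmem.1, hmem.2.1⟩

lemma IsSunflowerIn.card_lt {s i : ℕ} {ω : Fin (n + 1) → Bool} {C : Finset (Fin (n + 1))}
    {P : Finset (Finset (Fin (n + 1)))} (h : IsSunflowerIn (repFinsets n s i ω) C P)
    (hP : 2 ≤ #P) : #C < s := by
  by_contra! hs
  have : P ⊆ {∅} := fun Q hQ => by
    have := (h.card_add_card hQ).1
    simpa [← card_eq_zero] using (show #Q = 0 by omega)
  have := card_le_card this
  rw [card_singleton] at this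
  omega

open scoped Classical in
noncomputable def sunflowerConfigs (n i s r c : ℕ) :
    Finset (Finset (Fin (n + 1)) × Finset (Finset (Fin (n + 1)))) :=
  {CP | #CP.1 = c ∧ #CP.2 = r ∧ IsSunflowerIn (repFinsets n s i fun _ => true) CP.1 CP.2}

lemma mem_sunflowerConfigs {i s r c : ℕ}
    {CP : Finset (Fin (n + 1)) × Finset (Finset (Fin (n + 1)))} :
    CP ∈ sunflowerConfigs n i s r c ↔
      #CP.1 = c ∧ #CP.2 = r ∧ IsSunflowerIn (repFinsets n s i fun _ => true) CP.1 CP.2 := by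
  simp [sunflowerConfigs]

lemma exists_mem_sunflowerConfigs_of_le_Y {s r i : ℕ} {ω : Fin (n + 1) → Bool} (hs : 1 ≤ s)
    (hr : 3 ≤ r) (hY : (r - 1) ^ s * s ! ≤ Y n s i ω) :
    ∃ c < s, ∃ CP ∈ sunflowerConfigs n i s r c, ∀ x ∈ CP.1 ∪ CP.2.biUnion id, ω x = true := by
  obtain ⟨C, P, hP, hCP⟩ := exists_isSunflowerIn_of_sum_eq Fin.val_injective hs hr
    (fun S hS => (mem_repFinsets.1 hS).1)
    (fun S hS T hT => by rw [(mem_repFinsets.1 hS).2.1, (mem_repFinsets.1 hT).2.1]) hY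
  refine ⟨#C, hCP.card_lt (by omega), (C, P),
    mem_sunflowerConfigs.2 ⟨rfl, hP, hCP.mono (repFinsets_subset s i ω)⟩, fun x hx => ?_⟩
  have htrue : ∀ Q ∈ P, ∀ x ∈ C ∪ Q, ω x = true := fun Q hQ =>
    (mem_repFinsets.1 (hCP.1 Q hQ).2).2.2
  rcases mem_union.1 hx with hxC | hxP
  · obtain ⟨Q, hQ⟩ := card_pos.1 (by omega : 0 < #P)
    exact htrue Q hQ x (mem_union_left _ hxC)
  · obtain ⟨Q, hQ, hxQ⟩ := mem_biUnion.1 hxP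
    exact htrue Q hQ x (mem_union_right _ hxQ)

lemma card_union_biUnion_of_mem_sunflowerConfigs {i s r c : ℕ}
    {CP : Finset (Fin (n + 1)) × Finset (Finset (Fin (n + 1)))}
    (h : CP ∈ sunflowerConfigs n i s r c) : #(CP.1 ∪ CP.2.biUnion id) = c + r * (s - c) := by
  obtain ⟨hc, hr, hCP⟩ := mem_sunflowerConfigs.1 h
  have hpetal : ∀ Q ∈ CP.2, #(id Q) = s - c := fun Q hQ => by
    have := (hCP.card_add_card hQ).1
    rw [id, ← hc]
    omega
  rw [card_union_of_disjoint ((disjoint_biUnion_right _ _ id).2 fun Q hQ => (hCP.1 Q hQ).1),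
    card_biUnion hCP.2, hc, sum_congr rfl hpetal, sum_const, hr, smul_eq_mul]

lemma card_sunflowerConfigs_le {i s r c : ℕ} (hc : c < s) :
    #(sunflowerConfigs n i s r c) ≤ (n + 1) ^ (c + r * (s - 1 - c)) := by
  set f : Finset (Fin (n + 1)) → Finset (Fin (n + 1)) := fun Q => Q.erase (Q.sup id)
  have hpetal : ∀ CP ∈ sunflowerConfigs n i s r c, ∀ Q ∈ CP.2,
      (Q.Nonempty ∧ ∑ x ∈ Q, (x : ℕ) = i - ∑ x ∈ CP.1, (x : ℕ)) ∧ #Q = s - c := by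
    intro CP hCP Q hQ
    obtain ⟨hc', -, hCP⟩ := mem_sunflowerConfigs.1 hCP
    obtain ⟨hcard, hsum⟩ := hCP.card_add_card hQ
    exact ⟨⟨card_pos.1 (by omega), by omega⟩, by omega⟩
  calc #(sunflowerConfigs n i s r c)
      ≤ #(powersetCard c univ ×ˢ powersetCard r (powersetCard (s - 1 - c) univ)) := by
        refine card_le_card_of_injOn (fun CP => (CP.1, CP.2.image f)) (fun CP hCP => ?_)
          fun CP hCP CP' hCP' h => ?_
        · obtain ⟨hc', hr, -⟩ := mem_sunflowerConfigs.1 hCP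
          have hinj : Set.InjOn f CP.2 :=
            (injOn_erase_sup Fin.val_injective _).mono fun Q hQ => (hpetal CP hCP Q hQ).1
          simp only [coe_product, Set.mem_prod, mem_coe, mem_powersetCard, subset_univ,
            true_and, card_image_of_injOn hinj, hr, and_true]
          refine ⟨hc', fun R hR => ?_⟩
          obtain ⟨Q, hQ, rfl⟩ := mem_image.1 hR
          obtain ⟨⟨hne, -⟩, hcard⟩ := hpetal CP hCP Q hQ
          simp only [mem_powersetCard, subset_univ, true_and, f, card_erase_of_mem (sup_id_mem hne),
            hcard]
          omega
        · obtain ⟨h1, h2⟩ := Prod.ext_iff.1 h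
          dsimp only at h1 h2
          refine Prod.ext h1 (injOn_image_erase_sup Fin.val_injective _
            (fun Q hQ => (hpetal CP hCP Q hQ).1) (fun Q hQ => ?_) h2)
          rw [h1]
          exact (hpetal CP' hCP' Q hQ).1
    _ ≤ (n + 1) ^ c * ((n + 1) ^ (s - 1 - c)) ^ r := by
        simp only [card_product, card_powersetCard, card_univ, Fintype.card_fin]
        exact Nat.mul_le_mul (Nat.choose_le_pow _ _)
          ((Nat.choose_le_pow _ _).trans (Nat.pow_le_pow_left (Nat.choose_le_pow _ _) r))
    _ = (n + 1) ^ (c + r * (s - 1 - c)) := by rw [← pow_mul, ← pow_add, mul_comm r]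

lemma bern_toMeasure_true (p : ℝ) : (bern p).toMeasure {true} = min (ENNReal.ofReal p) 1 := by
  rw [PMF.toMeasure_apply_singleton _ _ (measurableSet_singleton _)]
  rfl

lemma randSet_forall_true (n : ℕ) (p : ℝ) (W : Finset (Fin (n + 1))) :
    randSet n p {ω | ∀ x ∈ W, ω x = true} = min (ENNReal.ofReal p) 1 ^ #W := by
  classical
  have hpi : {ω : Fin (n + 1) → Bool | ∀ x ∈ W, ω x = true} =
      Set.univ.pi fun x => if x ∈ (W : Set (Fin (n + 1))) then {true} else Set.univ := by
    rw [Set.univ_pi_ite]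
    ext ω
    simp
  rw [randSet, hpi, Measure.pi_pi]
  simp only [apply_ite, bern_toMeasure_true, measure_univ, mem_coe]
  rw [prod_ite_mem, univ_inter, prod_const]

lemma randSet_le_Y_le_sum {s r i : ℕ} (hs : 1 ≤ s) (hr : 3 ≤ r) {p : ℝ} (hp : 0 ≤ p) :
    randSet n p {ω | (r - 1) ^ s * s ! ≤ Y n s i ω} ≤
      ∑ c ∈ range s,
        ENNReal.ofReal (((n : ℝ) + 1) ^ (c + r * (s - 1 - c)) * p ^ (c + r * (s - c))) :=
  calc randSet n p {ω | (r - 1) ^ s * s ! ≤ Y n s i ω}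
      ≤ randSet n p (⋃ c ∈ range s, ⋃ CP ∈ sunflowerConfigs n i s r c,
          {ω | ∀ x ∈ CP.1 ∪ CP.2.biUnion id, ω x = true}) := by
        refine measure_mono fun ω hω => ?_
        obtain ⟨c, hc, CP, hCP, htrue⟩ := exists_mem_sunflowerConfigs_of_le_Y hs hr hω
        exact Set.mem_biUnion (mem_range.2 hc) (Set.mem_biUnion hCP htrue)
    _ ≤ ∑ c ∈ range s, ∑ CP ∈ sunflowerConfigs n i s r c,
          randSet n p {ω | ∀ x ∈ CP.1 ∪ CP.2.biUnion id, ω x = true} :=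
        (measure_biUnion_finset_le _ _).trans (sum_le_sum fun c _ => measure_biUnion_finset_le _ _)
    _ = ∑ c ∈ range s, #(sunflowerConfigs n i s r c) *
          min (ENNReal.ofReal p) 1 ^ (c + r * (s - c)) := by
        refine sum_congr rfl fun c _ => ?_
        rw [sum_congr rfl fun CP hCP => by
          rw [randSet_forall_true, card_union_biUnion_of_mem_sunflowerConfigs hCP], sum_const,
          nsmul_eq_mul]
    _ ≤ ∑ c ∈ range s, ENNReal.ofReal (((n : ℝ) + 1) ^ (c + r * (s - 1 - c)) *
          p ^ (c + r * (s - c))) := by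
        refine sum_le_sum fun c hc => ?_
        rw [ENNReal.ofReal_mul (by positivity), ENNReal.ofReal_pow hp,
          ENNReal.ofReal_pow (by positivity)]
        gcongr
        · exact_mod_cast card_sunflowerConfigs_le (mem_range.1 hc)
        · exact min_le_left _ _

end Configurations

section Asymptotics

open Real

lemma rpow_one_div_log_div_pow_le {k : ℕ} (hk : 0 < k) {K a x : ℝ} (hK : 0 ≤ K) (ha : 0 < a)
    (hx : 1 ≤ x) :
    (K * log x / x ^ (k - 1)) ^ ((1 : ℝ) / k) ≤
      (K / a) ^ ((1 : ℝ) / k) * x ^ ((a - (k - 1)) / k) := by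
  have hx0 : 0 < x := by linarith
  have hbase : K * log x / x ^ (k - 1) ≤ K / a * x ^ (a - (k - 1)) := by
    rw [rpow_sub hx0, ← Nat.cast_pred hk, rpow_natCast]
    calc K * log x / x ^ (k - 1) ≤ K * (x ^ a / a) / x ^ (k - 1) := by
          gcongr
          exact log_le_rpow_div hx0.le ha
      _ = K / a * (x ^ a / x ^ (k - 1)) := by ring
  calc (K * log x / x ^ (k - 1)) ^ ((1 : ℝ) / k)
      ≤ (K / a * x ^ (a - (k - 1))) ^ ((1 : ℝ) / k) := by
        gcongr
        have := log_nonneg hx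
        positivity
    _ = (K / a) ^ ((1 : ℝ) / k) * x ^ ((a - (k - 1)) / k) := by
        rw [mul_rpow (by positivity) (by positivity), ← rpow_mul hx0.le, mul_one_div]

lemma exists_pow_mul_rpow_le {k A e : ℕ} (hk : 0 < k) {K β δ : ℝ} (hK : 0 ≤ K) (hδ : 0 < δ)
    (hexp : (A : ℝ) - (k - 1) * e / k ≤ β) :
    ∃ C, ∀ n : ℕ, 1 ≤ n → ((n : ℝ) + 1) ^ A *
      ((K * log n / (n : ℝ) ^ (k - 1)) ^ ((1 : ℝ) / k)) ^ e ≤ C * (n : ℝ) ^ (β + δ) := by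
  -- `log n ≤ n ^ a / a` with this `a` costs a factor `n ^ (a e / k) ≤ n ^ δ`.
  set a : ℝ := δ * k / (e + 1)
  have ha : 0 < a := by positivity
  refine ⟨2 ^ A * ((K / a) ^ ((1 : ℝ) / k)) ^ e, fun n hn => ?_⟩
  have hx : (1 : ℝ) ≤ n := by exact_mod_cast hn
  have hx0 : (0 : ℝ) < n := by linarith
  have hae : a * e / k ≤ δ := by
    rw [div_le_iff₀ (by positivity), div_mul_eq_mul_div, div_le_iff₀ (by positivity)]
    nlinarith
  calc ((n : ℝ) + 1) ^ A * ((K * log n / (n : ℝ) ^ (k - 1)) ^ ((1 : ℝ) / k)) ^ e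
      ≤ (2 * n) ^ A * ((K / a) ^ ((1 : ℝ) / k) * (n : ℝ) ^ ((a - (k - 1)) / k)) ^ e := by
        have := log_nonneg hx
        gcongr
        · linarith
        · exact rpow_one_div_log_div_pow_le hk hK ha hx
    _ = 2 ^ A * ((K / a) ^ ((1 : ℝ) / k)) ^ e *
          (n : ℝ) ^ ((A : ℝ) - (k - 1) * e / k + a * e / k) := by
        rw [show (A : ℝ) - (k - 1) * e / k + a * e / k = A + (a - (k - 1)) / k * e by ring,
          rpow_add hx0, rpow_natCast, rpow_mul hx0.le, rpow_natCast]
        ring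
    _ ≤ 2 ^ A * ((K / a) ^ ((1 : ℝ) / k)) ^ e * (n : ℝ) ^ (β + δ) := by
        gcongr

lemma sunflower_exponent_le {k c : ℕ} (hc : c < k - 1) :
    ((c + 3 * k * (k - 1 - 1 - c) : ℕ) : ℝ) -
      (k - 1) * ((c + 3 * k * (k - 1 - c) : ℕ) : ℝ) / k ≤ -3 := by
  obtain ⟨m, rfl⟩ : ∃ m, k = c + m + 2 := ⟨k - c - 2, by omega⟩
  rw [show c + m + 2 - 1 - 1 - c = m by omega, show c + m + 2 - 1 - c = m + 1 by omega]
  have hk : (0 : ℝ) < (c + m + 2 : ℕ) := by positivity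
  rw [sub_le_iff_le_add, ← sub_le_iff_le_add', le_div_iff₀ hk]
  push_cast
  nlinarith

end Asymptotics

theorem few_overlapping_sums_general (k : ℕ) (hk : 3 ≤ k) (α ε : ℝ)
    (hα0 : 0 < α) (hε : 0 < ε) (δ : ℝ) (hδ : 0 < δ) :
    ∃ C : ℝ, ∀ n : ℕ, ∀ i : ℕ, 1 ≤ i → (i : ℝ) ≤ ((k : ℝ) - α) * n →
      randSet n (((4 + ε) * (k.factorial : ℝ) ^ 2 / α ^ (k - 1) * Real.log n /
            (n : ℝ) ^ (k - 1)) ^ ((1 : ℝ) / k))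
          {ω | (3 * k - 1) ^ (k - 1) * (k - 1).factorial ≤ Y n (k - 1) i ω} ≤
        ENNReal.ofReal (C * (n : ℝ) ^ (-3 + δ)) := by
  set K := (4 + ε) * (k.factorial : ℝ) ^ 2 / α ^ (k - 1)
  have hK : 0 < K := by positivity
  choose! C hC using fun c (hc : c ∈ range (k - 1)) =>
    exists_pow_mul_rpow_le (A := c + 3 * k * (k - 1 - 1 - c)) (e := c + 3 * k * (k - 1 - c))
      (by omega) hK.le hδ (sunflower_exponent_le (mem_range.1 hc))
  refine ⟨∑ c ∈ range (k - 1), C c, fun n i hi hin => ?_⟩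
  have hn : 1 ≤ n := by
    rcases Nat.eq_zero_or_pos n with rfl | hn
    · have : (1 : ℝ) ≤ i := by exact_mod_cast hi
      simp only [CharP.cast_eq_zero, mul_zero] at hin
      linarith
    · exact hn
  have hp : 0 ≤ (K * Real.log n / (n : ℝ) ^ (k - 1)) ^ ((1 : ℝ) / k) := by
    have := Real.log_natCast_nonneg n
    positivity
  calc _ ≤ ∑ c ∈ range (k - 1), ENNReal.ofReal (((n : ℝ) + 1) ^ (c + 3 * k * (k - 1 - 1 - c)) *
          ((K * Real.log n / (n : ℝ) ^ (k - 1)) ^ ((1 : ℝ) / k)) ^ (c + 3 * k * (k - 1 - c))) :=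
        randSet_le_Y_le_sum (by omega) (by omega) hp
    _ ≤ ∑ c ∈ range (k - 1), ENNReal.ofReal (C c * (n : ℝ) ^ (-3 + δ)) :=
        sum_le_sum fun c hc => ENNReal.ofReal_le_ofReal (hC c hc n hn)
    _ = ENNReal.ofReal ((∑ c ∈ range (k - 1), C c) * (n : ℝ) ^ (-3 + δ)) := by
        rw [sum_mul, ENNReal.ofReal_sum_of_nonneg fun c hc =>
          (by positivity : (0 : ℝ) ≤ _).trans (hC c hc n hn)]

/-- Lemma 3.2. For fixed `k ≥ 3`, `α ∈ (0,1)`, `ε > 0`,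
`K = (4+ε)(k!)²/α^{k-1}`, `p_n = (K·log n/n^{k-1})^{1/k}`: for every `δ > 0` there is a
constant `C` with `P(Y_{k-1,n}(i) ≥ (3k-1)^{k-1}(k-1)!) ≤ C·n^{-3+δ}` for all `n` and
all `1 ≤ i ≤ (k-α)n`. -/
theorem few_overlapping_sums (k : ℕ) (hk : 3 ≤ k) (α ε : ℝ)
    (hα0 : 0 < α) (hα1 : α < 1) (hε : 0 < ε) (δ : ℝ) (hδ : 0 < δ) :
    ∃ C : ℝ, ∀ n : ℕ, ∀ i : ℕ, 1 ≤ i → (i : ℝ) ≤ ((k : ℝ) - α) * n →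
      randSet n (((4 + ε) * (k.factorial : ℝ) ^ 2 / α ^ (k - 1) * Real.log n /
            (n : ℝ) ^ (k - 1)) ^ ((1 : ℝ) / k))
          {ω | (3 * k - 1) ^ (k - 1) * (k - 1).factorial ≤ Y n (k - 1) i ω} ≤
        ENNReal.ofReal (C * (n : ℝ) ^ (-3 + δ)) :=
  few_overlapping_sums_general k hk α ε hα0 hε δ hδ
end

section
/- (Lemma 3.5) Fix an integer k ≥ 3, α ∈ (0,1), ε > 0, and set K = (4+ε)·(k!)²/α^{k−1} and p_n = (K·log n / n^{k−1})^{1/k}. Then there is a sequence ε_n → 0 such that for all n and every integer j with α·n ≤ j ≤ (k−α)·n, E[Y*_{k,n}(j)] ≤ E[Y_{k,n}(j)] ≤ E[Y*_{k,n}(j)] + ε_n. -/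
/-!
`Y − Y*` is at most the number of ordered pairs of distinct, intersecting representations of `j`
in `𝒜`: discarding every representation that meets another one leaves a disjoint family. A
`k`-set with prescribed sum is determined by `k − 1` of its elements, so there are at most
`2^k (n+1)^(k+s-2)` such pairs `(S, T)` with `|T \ S| = s`, and each lies in `𝒜` with
probability `p^(k+s)`. Since `p^k = K log n / n^(k-1)`, the summand for `s` is
`O((log n)^((k+s)/k) · n^(-(k-s)/k))`, which tends to `0` whatever `j` is.
-/

open MeasureTheory Filter
open scoped ENNReal

open Finset

section SumSets

variable {α : Type*} [Fintype α] [DecidableEq α] {w : α → ℕ}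

theorem card_filter_card_eq_sum_eq_le (hw : Function.Injective w) (m c : ℕ) :
    #{A : Finset α | A.card = m ∧ ∑ i ∈ A, w i = c} ≤ Fintype.card α ^ (m - 1) := by
  rcases m with _ | m
  · calc #{A : Finset α | A.card = 0 ∧ ∑ i ∈ A, w i = c} ≤ #{(∅ : Finset α)} :=
          card_le_card fun A hA => by simp_all
      _ = Fintype.card α ^ (0 - 1) := by simp
  -- an `(m+1)`-set with prescribed sum is determined by any of its `m`-subsets
  calc #{A : Finset α | A.card = m + 1 ∧ ∑ i ∈ A, w i = c} ≤ #(powersetCard m univ) := by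
        refine card_le_card_of_forall_subsingleton (fun A B => B ⊆ A) (fun A hA => ?_) ?_
        · obtain ⟨B, hBA, hB⟩ := exists_subset_card_eq (s := A) (n := m) (by simp_all)
          exact ⟨B, mem_powersetCard.2 ⟨subset_univ B, hB⟩, hBA⟩
        · intro B hB A₁ ⟨hA₁, hBA₁⟩ A₂ ⟨hA₂, hBA₂⟩
          simp only [mem_filter, mem_univ, true_and] at hA₁ hA₂
          rw [mem_powersetCard] at hB
          obtain ⟨a₁, ha₁, rfl⟩ := exists_eq_insert_iff.2 ⟨hBA₁, by omega⟩
          obtain ⟨a₂, ha₂, rfl⟩ := exists_eq_insert_iff.2 ⟨hBA₂, by omega⟩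
          rw [sum_insert ha₁] at hA₁
          rw [sum_insert ha₂] at hA₂
          rw [hw (by omega : w a₁ = w a₂)]
    _ = (Fintype.card α).choose m := by rw [card_powersetCard, card_univ]
    _ ≤ Fintype.card α ^ (m + 1 - 1) := Nat.choose_le_pow _ _

theorem card_filter_sum_eq_card_sdiff_eq_le (hw : Function.Injective w) (S : Finset α)
    (j s : ℕ) :
    #{T : Finset α | ∑ i ∈ T, w i = j ∧ (T \ S).card = s} ≤
      2 ^ S.card * Fintype.card α ^ (s - 1) := by
  -- `T` is determined by its trace `T ∩ S` and the `s`-set `T \ S`, whose sum is then prescribed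
  calc #{T : Finset α | ∑ i ∈ T, w i = j ∧ (T \ S).card = s}
      ≤ #(S.powerset.sigma fun B =>
          {D : Finset α | D.card = s ∧ ∑ i ∈ D, w i = j - ∑ i ∈ B, w i}) := by
        refine card_le_card_of_injOn (fun T => ⟨T ∩ S, T \ S⟩) (fun T hT => ?_) ?_
        · simp only [coe_filter, Set.mem_ofPred_eq, mem_univ, true_and] at hT
          simp only [coe_sigma, Set.mem_sigma_iff, coe_powerset, Set.mem_preimage,
            Set.mem_powerset_iff, coe_subset, inter_subset_right, coe_filter, mem_univ,
            true_and, Set.mem_ofPred_eq]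
          refine ⟨hT.2, ?_⟩
          rw [← hT.1, ← sum_inter_add_sum_sdiff T S]
          omega
        · intro T _ T' _ h
          simp only [Sigma.mk.inj_iff, heq_eq_eq] at h
          rw [← sdiff_union_inter T S, h.1, h.2, sdiff_union_inter]
    _ ≤ ∑ _B ∈ S.powerset, Fintype.card α ^ (s - 1) := by
        rw [card_sigma]
        exact sum_le_sum fun B _ => card_filter_card_eq_sum_eq_le hw s _
    _ = 2 ^ S.card * Fintype.card α ^ (s - 1) := by rw [sum_const, card_powerset, smul_eq_mul]

end SumSets

section Overlaps

variable {α : Type*} [DecidableEq α]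

def overlapPairs (G : Finset (Finset α)) : Finset (Σ _ : Finset α, Finset α) :=
  G.sigma fun S => {T ∈ G | T ≠ S ∧ ¬Disjoint S T}

theorem overlapPairs_filter (G : Finset (Finset α)) (P : Finset α → Prop) [DecidablePred P] :
    overlapPairs {S ∈ G | P S} = {x ∈ overlapPairs G | P x.1 ∧ P x.2} := by
  ext ⟨S, T⟩
  simp only [overlapPairs, mem_sigma, mem_filter]
  tauto

theorem exists_pairwiseDisjoint_card_le_add_card_overlapPairs (G : Finset (Finset α)) :
    ∃ 𝒞 ⊆ G, (𝒞 : Set (Finset α)).Pairwise Disjoint ∧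
      G.card ≤ 𝒞.card + (overlapPairs G).card := by
  refine ⟨{S ∈ G | ∀ T ∈ G, T ≠ S → Disjoint S T}, filter_subset _ _, ?_, ?_⟩
  · intro S hS T hT hST
    simp only [coe_filter, Set.mem_ofPred_eq] at hS hT
    exact hS.2 T hT.1 hST.symm
  -- each discarded member is the first entry of some pair in `overlapPairs G`
  · rw [← card_filter_add_card_filter_not (s := G)
        (fun S => ∀ T ∈ G, T ≠ S → Disjoint S T),
      overlapPairs, card_sigma, card_filter (fun S => ¬∀ T ∈ G, T ≠ S → Disjoint S T)]
    gcongr with S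
    split_ifs with h
    · exact Nat.zero_le _
    · push Not at h
      obtain ⟨T, hT, hTS, hST⟩ := h
      exact card_pos.2 ⟨T, mem_filter.2 ⟨hT, hTS, hST⟩⟩

end Overlaps

section Ystar

variable {n k j : ℕ} {ω : Fin (n + 1) → Bool}

theorem le_Ystar {𝒞 : Finset (Finset (Fin (n + 1)))} (h𝒞 : 𝒞 ⊆ repFinsets n k j ω)
    (hdisj : (𝒞 : Set (Finset (Fin (n + 1)))).Pairwise Disjoint) :
    𝒞.card ≤ Ystar n k j ω :=
  le_sup (f := card) (mem_filter.2 ⟨mem_univ _, h𝒞, hdisj⟩)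

theorem Ystar_le_Y : Ystar n k j ω ≤ Y n k j ω :=
  Finset.sup_le fun _ h𝒞 => card_le_card (mem_filter.1 h𝒞).2.1

theorem Y_le_Ystar_add_card_overlapPairs :
    Y n k j ω ≤ Ystar n k j ω + (overlapPairs (repFinsets n k j ω)).card := by
  obtain ⟨𝒞, h𝒞, hdisj, hcard⟩ :=
    exists_pairwiseDisjoint_card_le_add_card_overlapPairs (repFinsets n k j ω)
  have := le_Ystar h𝒞 hdisj
  unfold Y
  omega

end Ystar

section Expectation

variable {n : ℕ} {p : ℝ}

instance (n : ℕ) (p : ℝ) : IsProbabilityMeasure (randSet n p) := by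
  unfold randSet; infer_instance

theorem measureReal_randSet_forall_true (hp : 0 ≤ p) (U : Finset (Fin (n + 1))) :
    (randSet n p).real {ω | ∀ i ∈ U, ω i = true} = min p 1 ^ U.card := by
  have hpi : {ω : Fin (n + 1) → Bool | ∀ i ∈ U, ω i = true} =
      Set.univ.pi fun i => if i ∈ U then {true} else Set.univ := by
    ext ω
    simp only [Set.mem_ofPred_eq, Set.mem_pi, Set.mem_univ, forall_const]
    refine forall_congr' fun i => ?_
    by_cases hi : i ∈ U <;> simp [hi]
  have hfactor (i : Fin (n + 1)) : (bern p).toMeasure (if i ∈ U then {true} else Set.univ) =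
      if i ∈ U then ((min p.toNNReal 1 : NNReal) : ℝ≥0∞) else 1 := by
    split_ifs
    · rw [PMF.toMeasure_apply_singleton _ _ (measurableSet_singleton _)]
      rfl
    · exact measure_univ
  rw [measureReal_def, hpi, randSet, Measure.pi_pi, prod_congr rfl fun i _ => hfactor i,
    prod_ite_mem, univ_inter, prod_const, ENNReal.toReal_pow, ENNReal.coe_toReal,
    NNReal.coe_min, Real.coe_toNNReal _ hp, NNReal.coe_one]

theorem integral_card_filter_forall_true {ι : Type*} (hp : 0 ≤ p) (P : Finset ι)
    (U : ι → Finset (Fin (n + 1))) :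
    ∫ ω, (#{x ∈ P | ∀ i ∈ U x, ω i = true} : ℝ) ∂randSet n p =
      ∑ x ∈ P, min p 1 ^ (U x).card := by
  simp_rw [card_filter, Nat.cast_sum, Nat.cast_ite, Nat.cast_one, Nat.cast_zero]
  rw [integral_finsetSum _ fun _ _ => Integrable.of_finite]
  refine sum_congr rfl fun x _ => ?_
  rw [← measureReal_randSet_forall_true hp, ← integral_indicator_one MeasurableSet.of_discrete]
  congr 1 with ω
  simp only [Set.indicator_apply, Set.mem_ofPred_eq, Pi.one_apply]

end Expectation

section Counting

def sumSets (n k j : ℕ) : Finset (Finset (Fin (n + 1))) :=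
  {S | S.card = k ∧ ∑ i ∈ S, (i : ℕ) = j}

theorem repFinsets_eq_filter_sumSets (n k j : ℕ) (ω : Fin (n + 1) → Bool) :
    repFinsets n k j ω = {S ∈ sumSets n k j | ∀ i ∈ S, ω i = true} := by
  ext S
  simp [repFinsets, sumSets, and_assoc]

theorem card_sumSets_le (n k j : ℕ) : (sumSets n k j).card ≤ (n + 1) ^ (k - 1) := by
  simpa [sumSets] using card_filter_card_eq_sum_eq_le Fin.val_injective k j

theorem card_sdiff_mem_Icc {α : Type*} [DecidableEq α] {k : ℕ} {S T : Finset α}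
    (hS : S.card = k) (hT : T.card = k) (hTS : T ≠ S) (hST : ¬Disjoint S T) :
    (T \ S).card ∈ Icc 1 (k - 1) := by
  have hinter : 1 ≤ (T ∩ S).card :=
    card_pos.2 (not_disjoint_iff_nonempty_inter.1 fun h => hST h.symm)
  have hsdiff : 1 ≤ (T \ S).card :=
    card_pos.2 (sdiff_nonempty.2 fun h => hTS (eq_of_subset_of_card_le h (by omega)))
  have := card_sdiff_add_card_inter T S
  rw [mem_Icc]
  omega

variable {n k j : ℕ} {q : ℝ}

theorem sum_overlapping_sumSets_le (hq : 0 ≤ q) {S : Finset (Fin (n + 1))}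
    (hS : S ∈ sumSets n k j) :
    ∑ T ∈ sumSets n k j with T ≠ S ∧ ¬Disjoint S T, q ^ (S ∪ T).card ≤
      ∑ s ∈ Icc 1 (k - 1), 2 ^ k * ((n : ℝ) + 1) ^ (s - 1) * q ^ (k + s) := by
  simp only [sumSets, mem_filter, mem_univ, true_and] at hS
  have hmaps : ∀ T ∈ {T ∈ sumSets n k j | T ≠ S ∧ ¬Disjoint S T},
      (T \ S).card ∈ Icc 1 (k - 1) := by
    intro T hT
    simp only [sumSets, mem_filter, mem_univ, true_and] at hT
    exact card_sdiff_mem_Icc hS.1 hT.1.1 hT.2.1 hT.2.2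
  rw [← sum_fiberwise_of_maps_to hmaps]
  gcongr with s
  have hunion :
      ∀ T ∈ {T ∈ {T ∈ sumSets n k j | T ≠ S ∧ ¬Disjoint S T} | (T \ S).card = s},
      q ^ (S ∪ T).card = q ^ (k + s) := by
    intro T hT
    rw [mem_filter] at hT
    rw [union_comm, ← card_sdiff_add_card, hT.2, hS.1, add_comm]
  have hcard : #{T ∈ {T ∈ sumSets n k j | T ≠ S ∧ ¬Disjoint S T} | (T \ S).card = s} ≤
      2 ^ k * (n + 1) ^ (s - 1) := by
    calc _ ≤ #{T : Finset (Fin (n + 1)) | ∑ i ∈ T, (i : ℕ) = j ∧ (T \ S).card = s} :=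
          card_le_card fun T hT => by simp_all [sumSets]
      _ ≤ 2 ^ k * (n + 1) ^ (s - 1) := by
          simpa [hS.1] using card_filter_sum_eq_card_sdiff_eq_le Fin.val_injective S j s
  rw [sum_congr rfl hunion, sum_const, nsmul_eq_mul]
  gcongr
  exact_mod_cast hcard

theorem sum_overlapPairs_sumSets_le (hq : 0 ≤ q) :
    ∑ x ∈ overlapPairs (sumSets n k j), q ^ (x.1 ∪ x.2).card ≤
      ∑ s ∈ Icc 1 (k - 1), 2 ^ k * ((n : ℝ) + 1) ^ (k + s - 2) * q ^ (k + s) := by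
  calc ∑ x ∈ overlapPairs (sumSets n k j), q ^ (x.1 ∪ x.2).card
      = ∑ S ∈ sumSets n k j, ∑ T ∈ sumSets n k j with T ≠ S ∧ ¬Disjoint S T,
          q ^ (S ∪ T).card := sum_sigma _ _ _
    _ ≤ ∑ _S ∈ sumSets n k j,
          ∑ s ∈ Icc 1 (k - 1), 2 ^ k * ((n : ℝ) + 1) ^ (s - 1) * q ^ (k + s) :=
        sum_le_sum fun S hS => sum_overlapping_sumSets_le hq hS
    _ ≤ ((n : ℝ) + 1) ^ (k - 1) *
          ∑ s ∈ Icc 1 (k - 1), 2 ^ k * ((n : ℝ) + 1) ^ (s - 1) * q ^ (k + s) := by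
        rw [sum_const, nsmul_eq_mul]
        gcongr
        exact_mod_cast card_sumSets_le n k j
    _ = ∑ s ∈ Icc 1 (k - 1), 2 ^ k * ((n : ℝ) + 1) ^ (k + s - 2) * q ^ (k + s) := by
        rw [mul_sum]
        refine sum_congr rfl fun s hs => ?_
        rw [mem_Icc] at hs
        rw [show k + s - 2 = (k - 1) + (s - 1) by omega, pow_add]
        ring

end Counting

section Asymptotics

open Topology

theorem pow_mul_rpow_pow_eq {x A : ℝ} (hx : 0 < x) (hA : 0 ≤ A) {k s : ℕ} (hs : 1 ≤ s)
    (hsk : s < k) :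
    x ^ (k + s - 2) * ((A / x ^ (k - 1)) ^ ((1 : ℝ) / k)) ^ (k + s) =
      A ^ (((k : ℝ) + s) / k) / x ^ (((k : ℝ) - s) / k) := by
  have hk : (k : ℝ) ≠ 0 := by exact_mod_cast (by omega : k ≠ 0)
  rw [← Real.rpow_natCast (_ ^ _), ← Real.rpow_mul (by positivity),
    Real.div_rpow hA (by positivity), ← Real.rpow_natCast x (k - 1), ← Real.rpow_mul hx.le,
    ← Real.rpow_natCast x (k + s - 2), mul_div_left_comm, ← Real.rpow_sub hx,
    div_eq_mul_inv (A ^ _), ← Real.rpow_neg hx.le]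
  push_cast [Nat.cast_sub (by omega : 2 ≤ k + s), Nat.cast_sub (by omega : 1 ≤ k)]
  congr 2
  · field_simp
  · field_simp
    ring

theorem tendsto_sum_overlapBound (k : ℕ) {K : ℝ} (hK : 0 ≤ K) :
    Tendsto (fun n : ℕ => ∑ s ∈ Icc 1 (k - 1), 2 ^ k * ((n : ℝ) + 1) ^ (k + s - 2) *
      ((K * Real.log n / (n : ℝ) ^ (k - 1)) ^ ((1 : ℝ) / k)) ^ (k + s)) atTop (𝓝 0) := by
  have hterm : ∀ s ∈ Icc 1 (k - 1),
      Tendsto (fun n : ℕ => 2 ^ k * ((n : ℝ) + 1) ^ (k + s - 2) *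
        ((K * Real.log n / (n : ℝ) ^ (k - 1)) ^ ((1 : ℝ) / k)) ^ (k + s)) atTop (𝓝 0) := by
    intro s hs
    rw [mem_Icc] at hs
    have hb : 0 < ((k : ℝ) - s) / k := by
      have : (s : ℝ) < k := by exact_mod_cast (by omega : s < k)
      apply div_pos <;> linarith
    set C : ℝ := 2 ^ k * 2 ^ (k + s - 2) * K ^ (((k : ℝ) + s) / k)
    have hlim : Tendsto (fun n : ℕ => C * (Real.log n ^ (((k : ℝ) + s) / k) /
        (n : ℝ) ^ (((k : ℝ) - s) / k))) atTop (𝓝 0) := by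
      simpa using ((isLittleO_log_rpow_rpow_atTop _ hb).tendsto_div_nhds_zero.comp
        tendsto_natCast_atTop_atTop).const_mul C
    refine squeeze_zero' (Eventually.of_forall fun n => by positivity) ?_ hlim
    filter_upwards [eventually_ge_atTop 1] with n hn
    have hx : (1 : ℝ) ≤ n := by exact_mod_cast hn
    calc 2 ^ k * ((n : ℝ) + 1) ^ (k + s - 2) *
          ((K * Real.log n / (n : ℝ) ^ (k - 1)) ^ ((1 : ℝ) / k)) ^ (k + s)
        ≤ 2 ^ k * (2 * (n : ℝ)) ^ (k + s - 2) *
          ((K * Real.log n / (n : ℝ) ^ (k - 1)) ^ ((1 : ℝ) / k)) ^ (k + s) := by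
          gcongr
          linarith
      _ = 2 ^ k * 2 ^ (k + s - 2) * ((n : ℝ) ^ (k + s - 2) *
          ((K * Real.log n / (n : ℝ) ^ (k - 1)) ^ ((1 : ℝ) / k)) ^ (k + s)) := by
          rw [mul_pow]
          ring
      _ = C * (Real.log n ^ (((k : ℝ) + s) / k) / (n : ℝ) ^ (((k : ℝ) - s) / k)) := by
          rw [pow_mul_rpow_pow_eq (by linarith) (by positivity) hs.1 (by omega),
            Real.mul_rpow hK (Real.log_natCast_nonneg n)]
          ring
  simpa using tendsto_finsetSum _ hterm

end Asymptotics

theorem expectation_Y_close_to_Ystar_general (k : ℕ) (α ε : ℝ)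
    (hα0 : 0 < α) (hε : 0 < ε) :
    ∃ e : ℕ → ℝ, Tendsto e atTop (nhds 0) ∧
      ∀ n : ℕ, ∀ j : ℕ, α * n ≤ (j : ℝ) → (j : ℝ) ≤ ((k : ℝ) - α) * n →
        (∫ ω, (Ystar n k j ω : ℝ)
            ∂ randSet n (((4 + ε) * (k.factorial : ℝ) ^ 2 / α ^ (k - 1) * Real.log n /
              (n : ℝ) ^ (k - 1)) ^ ((1 : ℝ) / k))) ≤
          (∫ ω, (Y n k j ω : ℝ)
            ∂ randSet n (((4 + ε) * (k.factorial : ℝ) ^ 2 / α ^ (k - 1) * Real.log n /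
              (n : ℝ) ^ (k - 1)) ^ ((1 : ℝ) / k))) ∧
        (∫ ω, (Y n k j ω : ℝ)
            ∂ randSet n (((4 + ε) * (k.factorial : ℝ) ^ 2 / α ^ (k - 1) * Real.log n /
              (n : ℝ) ^ (k - 1)) ^ ((1 : ℝ) / k))) ≤
          (∫ ω, (Ystar n k j ω : ℝ)
            ∂ randSet n (((4 + ε) * (k.factorial : ℝ) ^ 2 / α ^ (k - 1) * Real.log n /
              (n : ℝ) ^ (k - 1)) ^ ((1 : ℝ) / k))) + e n := by
  set K : ℝ := (4 + ε) * (k.factorial : ℝ) ^ 2 / α ^ (k - 1)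
  have hK : 0 ≤ K := by positivity
  refine ⟨_, tendsto_sum_overlapBound k hK, fun n j _ _ => ?_⟩
  set p : ℝ := (K * Real.log n / (n : ℝ) ^ (k - 1)) ^ ((1 : ℝ) / k)
  have hp : 0 ≤ p := by positivity
  refine ⟨integral_mono .of_finite .of_finite fun _ => Nat.cast_le.2 Ystar_le_Y, ?_⟩
  calc ∫ ω, (Y n k j ω : ℝ) ∂randSet n p
      ≤ ∫ ω, ((Ystar n k j ω : ℝ) + #(overlapPairs (repFinsets n k j ω))) ∂randSet n p :=
        integral_mono .of_finite .of_finite fun _ => by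
          rw [← Nat.cast_add]
          exact Nat.cast_le.2 Y_le_Ystar_add_card_overlapPairs
    _ = ∫ ω, (Ystar n k j ω : ℝ) ∂randSet n p +
          ∑ x ∈ overlapPairs (sumSets n k j), min p 1 ^ (x.1 ∪ x.2).card := by
        rw [integral_add .of_finite .of_finite, ← integral_card_filter_forall_true hp]
        simp only [repFinsets_eq_filter_sumSets, overlapPairs_filter, forall_mem_union]
    _ ≤ ∫ ω, (Ystar n k j ω : ℝ) ∂randSet n p +
          ∑ s ∈ Icc 1 (k - 1), 2 ^ k * ((n : ℝ) + 1) ^ (k + s - 2) * p ^ (k + s) := by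
        grw [sum_overlapPairs_sumSets_le (by positivity), min_le_left]

/-- Lemma 3.5. In the setting of Theorem 3.1, there is a sequence
`ε_n → 0` such that for all `n` and all `j ∈ [αn, (k-α)n]`,
`E[Y*_{k,n}(j)] ≤ E[Y_{k,n}(j)] ≤ E[Y*_{k,n}(j)] + ε_n`. -/
theorem expectation_Y_close_to_Ystar (k : ℕ) (hk : 3 ≤ k) (α ε : ℝ)
    (hα0 : 0 < α) (hα1 : α < 1) (hε : 0 < ε) :
    ∃ e : ℕ → ℝ, Tendsto e atTop (nhds 0) ∧
      ∀ n : ℕ, ∀ j : ℕ, α * n ≤ (j : ℝ) → (j : ℝ) ≤ ((k : ℝ) - α) * n →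
        (∫ ω, (Ystar n k j ω : ℝ)
            ∂ randSet n (((4 + ε) * (k.factorial : ℝ) ^ 2 / α ^ (k - 1) * Real.log n /
              (n : ℝ) ^ (k - 1)) ^ ((1 : ℝ) / k))) ≤
          (∫ ω, (Y n k j ω : ℝ)
            ∂ randSet n (((4 + ε) * (k.factorial : ℝ) ^ 2 / α ^ (k - 1) * Real.log n /
              (n : ℝ) ^ (k - 1)) ^ ((1 : ℝ) / k))) ∧
        (∫ ω, (Y n k j ω : ℝ)
            ∂ randSet n (((4 + ε) * (k.factorial : ℝ) ^ 2 / α ^ (k - 1) * Real.log n /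
              (n : ℝ) ^ (k - 1)) ^ ((1 : ℝ) / k))) ≤
          (∫ ω, (Ystar n k j ω : ℝ)
            ∂ randSet n (((4 + ε) * (k.factorial : ℝ) ^ 2 / α ^ (k - 1) * Real.log n /
              (n : ℝ) ^ (k - 1)) ^ ((1 : ℝ) / k))) + e n :=
  expectation_Y_close_to_Ystar_general k α ε hα0 hε
end

section
/- (Theorem 3.7, uniform form) Fix an integer k ≥ 3, α ∈ (0,1), ε > 0, and set K = (4+ε)·(k!)²/α^{k−1} and p_n = (K·log n / n^{k−1})^{1/k}. Then there exist a constant δ > 0 and N ∈ ℕ such that for all n ≥ N and every integer j with α·n ≤ j ≤ (k−α)·n, P(Y*_{k,n}(j) ≥ δ·log n) ≤ 2·n^{−5/4}. -/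
open MeasureTheory Filter
open scoped ENNReal

/-!
If `Y*_{k,n}(j) ≥ t`, then `𝒜` contains one of the families of `t` pairwise disjoint `k`-sets
summing to `j`. There are at most `M ≤ (n+1)^{k-1}` such `k`-sets, and since the sets of a
family are disjoint, the family lies in `𝒜` with probability `p^{tk}`. Hence
`P(Y* ≥ t) ≤ C(M,t) p^{tk} ≤ (e M p^k / t)^t` with `M p^k ≤ 2^{k-1} K log n`. For
`t = ⌈δ log n⌉` with `δ = e² 2^{k-1} K + 5/4` this is at most `e^{-t} ≤ n^{-δ} ≤ n^{-5/4}`.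
-/

open Finset Real

def sumFinsets (n k j : ℕ) : Finset (Finset (Fin (n + 1))) :=
  univ.filter fun S => #S = k ∧ ∑ i ∈ S, (i : ℕ) = j

def disjointSumFamilies (n k j t : ℕ) : Finset (Finset (Finset (Fin (n + 1)))) :=
  ((sumFinsets n k j).powersetCard t).filter fun 𝒞 =>
    (𝒞 : Set (Finset (Fin (n + 1)))).Pairwise fun S T => Disjoint S T

/-- A `(k+1)`-set with prescribed sum is determined by its `k` smallest elements. -/
theorem Finset.card_filter_sum_eq_le_choose {α M : Type*} [Fintype α] [LinearOrder α]
    [AddCancelCommMonoid M] [DecidableEq M] {f : α → M} (hf : Function.Injective f)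
    (k : ℕ) (m : M) :
    #(univ.filter fun S : Finset α => #S = k + 1 ∧ ∑ i ∈ S, f i = m) ≤
      (Fintype.card α).choose k := by
  set R := univ.filter fun S : Finset α => #S = k + 1 ∧ ∑ i ∈ S, f i = m
  have hR : ∀ S ∈ R, #S = k + 1 ∧ ∑ i ∈ S, f i = m := fun S hS => (mem_filter.1 hS).2
  have hne : ∀ S ∈ R, S.Nonempty := fun S hS => card_pos.1 (by rw [(hR S hS).1]; omega)
  let eraseMax : Finset α → Finset α := fun S =>
    if h : S.Nonempty then S.erase (S.max' h) else ∅
  have insert_eraseMax : ∀ S (h : S.Nonempty), insert (S.max' h) (eraseMax S) = S :=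
    fun S h => by simp only [eraseMax, dif_pos h, insert_erase (max'_mem S h)]
  have sum_eraseMax : ∀ S (hS : S ∈ R), f (S.max' (hne S hS)) + ∑ i ∈ eraseMax S, f i = m :=
    fun S hS => by
      simp only [eraseMax, dif_pos (hne S hS), add_sum_erase _ _ (max'_mem _ _), (hR S hS).2]
  calc #R ≤ #(univ.powersetCard k : Finset (Finset α)) := by
        refine card_le_card_of_injOn eraseMax (fun S hS => ?_) (fun S hS T hT hST => ?_)
        · simp only [eraseMax, dif_pos (hne S hS), mem_coe, mem_powersetCard_univ,
            card_erase_of_mem (max'_mem _ _), (hR S hS).1, Nat.add_sub_cancel]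
        · have hmax : S.max' (hne S hS) = T.max' (hne T hT) := hf <| add_right_cancel <|
            (sum_eraseMax S hS).trans ((sum_eraseMax T hT).symm.trans (by rw [hST]))
          rw [← insert_eraseMax S (hne S hS), ← insert_eraseMax T (hne T hT), hmax, hST]
    _ = (Fintype.card α).choose k := by rw [card_powersetCard, card_univ]

theorem card_sumFinsets_le (n k j : ℕ) : #(sumFinsets n (k + 1) j) ≤ (n + 1) ^ k :=
  calc #(sumFinsets n (k + 1) j) ≤ (Fintype.card (Fin (n + 1))).choose k :=
        Finset.card_filter_sum_eq_le_choose Fin.val_injective k j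
    _ ≤ (n + 1) ^ k := by simpa using Nat.choose_le_pow (n + 1) k

theorem card_biUnion_of_mem_disjointSumFamilies {n k j t : ℕ}
    {𝒞 : Finset (Finset (Fin (n + 1)))} (h𝒞 : 𝒞 ∈ disjointSumFamilies n k j t) : #(𝒞.biUnion id) = t * k := by
  simp only [disjointSumFamilies, mem_filter, mem_powersetCard] at h𝒞
  obtain ⟨⟨hsub, hcard⟩, hdisj⟩ := h𝒞
  have hk : ∀ S ∈ 𝒞, #(id S) = k := fun S hS => (mem_filter.1 (hsub hS)).2.1
  rw [card_biUnion (t := id) hdisj, sum_congr rfl hk, sum_const, hcard, smul_eq_mul]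

theorem exists_mem_disjointSumFamilies_of_le_Ystar {n k j t : ℕ} {ω : Fin (n + 1) → Bool}
    (ht : t ≤ Ystar n k j ω) :
    ∃ 𝒞 ∈ disjointSumFamilies n k j t, ∀ S ∈ 𝒞, ∀ i ∈ S, ω i = true := by
  rcases t.eq_zero_or_pos with rfl | htpos
  · exact ⟨∅, by simp [disjointSumFamilies], by simp⟩
  obtain ⟨𝒞₀, h𝒞₀, ht⟩ := (Finset.le_sup_iff htpos).1 ht
  obtain ⟨hrep, hdisj⟩ := (mem_filter.1 h𝒞₀).2
  obtain ⟨𝒞, hsub, rfl⟩ := exists_subset_card_eq ht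
  have hrep' : ∀ S ∈ 𝒞, #S = k ∧ ∑ i ∈ S, (i : ℕ) = j ∧ ∀ i ∈ S, ω i = true :=
    fun S hS => (mem_filter.1 (hrep S (hsub hS))).2
  refine ⟨𝒞, mem_filter.2 ⟨mem_powersetCard.2 ⟨fun S hS => ?_, rfl⟩,
    hdisj.mono (coe_subset.2 hsub)⟩, fun S hS => (hrep' S hS).2.2⟩
  exact mem_filter.2 ⟨mem_univ _, (hrep' S hS).1, (hrep' S hS).2.1⟩

theorem randSet_setOf_forall_mem (n : ℕ) (p : ℝ) (U : Finset (Fin (n + 1))) :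
    randSet n p {ω | ∀ i ∈ U, ω i = true} = min (ENNReal.ofReal p) 1 ^ #U := by
  classical
  have hcyl : {ω : Fin (n + 1) → Bool | ∀ i ∈ U, ω i = true} =
      Set.univ.pi fun i => if i ∈ U then {true} else Set.univ := by
    ext ω
    simp only [Set.mem_ofPred_eq, Set.mem_univ_pi]
    refine forall_congr' fun i => ?_
    split_ifs <;> simp_all
  have hval : ∀ i, (bern p).toMeasure (if i ∈ U then {true} else Set.univ)
      = if i ∈ U then min (ENNReal.ofReal p) 1 else 1 := by
    intro i
    split_ifs with hi
    · rw [PMF.toMeasure_apply_singleton _ _ (measurableSet_singleton _)]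
      exact ENNReal.coe_min _ _
    · exact measure_univ
  rw [randSet, hcyl, Measure.pi_pi]
  simp_rw [hval]
  rw [prod_ite_mem, univ_inter, prod_const]

theorem randSet_le_Ystar_le_choose_mul (n k j t : ℕ) (p : ℝ) :
    randSet n p {ω | t ≤ Ystar n k j ω} ≤
      (#(sumFinsets n k j)).choose t * ENNReal.ofReal p ^ (t * k) := by
  set F := disjointSumFamilies n k j t
  calc randSet n p {ω | t ≤ Ystar n k j ω}
      ≤ randSet n p (⋃ 𝒞 ∈ F, {ω | ∀ i ∈ 𝒞.biUnion id, ω i = true}) := by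
        refine measure_mono fun ω hω => ?_
        obtain ⟨𝒞, h𝒞, hω𝒞⟩ := exists_mem_disjointSumFamilies_of_le_Ystar hω
        simp only [Set.mem_iUnion, mem_biUnion, id]
        exact ⟨𝒞, h𝒞, fun i ⟨S, hS, hi⟩ => hω𝒞 S hS i hi⟩
    _ ≤ ∑ 𝒞 ∈ F, randSet n p {ω | ∀ i ∈ 𝒞.biUnion id, ω i = true} :=
        measure_biUnion_finset_le _ _
    _ ≤ ∑ _𝒞 ∈ F, ENNReal.ofReal p ^ (t * k) := by
        refine sum_le_sum fun 𝒞 h𝒞 => ?_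
        rw [randSet_setOf_forall_mem, card_biUnion_of_mem_disjointSumFamilies h𝒞]
        gcongr
        exact min_le_left _ _
    _ = #F * ENNReal.ofReal p ^ (t * k) := by rw [sum_const, nsmul_eq_mul]
    _ ≤ (#(sumFinsets n k j)).choose t * ENNReal.ofReal p ^ (t * k) := by
        gcongr
        exact_mod_cast (card_filter_le _ _).trans_eq (card_powersetCard _ _)

theorem Nat.choose_mul_pow_le (M t : ℕ) {y : ℝ} (hy : 0 ≤ y) :
    (M.choose t : ℝ) * y ^ t ≤ (exp 1 * M * y / t) ^ t := by
  rcases t.eq_zero_or_pos with rfl | ht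
  · simp
  have htt : (0 : ℝ) < (t : ℝ) ^ t := by positivity
  have hfac : (0 : ℝ) < t.factorial := by positivity
  calc (M.choose t : ℝ) * y ^ t ≤ (M : ℝ) ^ t / t.factorial * y ^ t := by
        gcongr
        exact Nat.choose_le_pow_div t M
    _ = (M * y) ^ t / t.factorial := by ring
    _ ≤ (M * y) ^ t * (exp t / (t : ℝ) ^ t) := by
        rw [div_eq_mul_one_div]
        refine mul_le_mul_of_nonneg_left ?_ (by positivity)
        rw [div_le_div_iff₀ hfac htt, one_mul]
        exact (div_le_iff₀ hfac).1 (pow_div_factorial_le_exp _ t.cast_nonneg t)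
    _ = (exp 1 * M * y / t) ^ t := by simp only [div_pow, mul_pow, exp_one_pow]; ring

theorem randSet_le_Ystar_le_exp_neg {n k : ℕ} (hn : 1 ≤ n) (hk : 1 ≤ k) {K : ℝ} (hK : 0 ≤ K)
    (j : ℕ) {t : ℕ} (ht : exp 2 * (2 ^ (k - 1) * K * log n) ≤ t) :
    randSet n ((K * log n / (n : ℝ) ^ (k - 1)) ^ ((1 : ℝ) / k)) {ω | t ≤ Ystar n k j ω} ≤
      ENNReal.ofReal (exp (-t)) := by
  obtain ⟨k, rfl⟩ := Nat.exists_eq_add_of_le' hk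
  rw [Nat.add_sub_cancel] at ht ⊢
  set x := K * log n / (n : ℝ) ^ k
  set M := #(sumFinsets n (k + 1) j)
  have hx : 0 ≤ x := by have := log_natCast_nonneg n; positivity
  have hpk : (x ^ ((1 : ℝ) / ↑(k + 1))) ^ (k + 1) = x := by
    rw [one_div]; exact rpow_inv_natCast_pow hx k.succ_ne_zero
  have hMx : (M : ℝ) * x ≤ 2 ^ k * K * log n := by
    have hM : (M : ℝ) ≤ 2 ^ k * (n : ℝ) ^ k := calc
      (M : ℝ) ≤ ((n : ℝ) + 1) ^ k := by exact_mod_cast card_sumFinsets_le n k j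
      _ ≤ (2 * (n : ℝ)) ^ k := by gcongr; linarith [(Nat.one_le_cast (α := ℝ)).2 hn]
      _ = 2 ^ k * (n : ℝ) ^ k := mul_pow _ _ _
    calc (M : ℝ) * x ≤ 2 ^ k * (n : ℝ) ^ k * x := by gcongr
      _ = 2 ^ k * K * log n := by simp only [x]; field_simp
  have hbase : exp 1 * M * x / t ≤ exp (-1) := by
    refine div_le_of_le_mul₀ t.cast_nonneg (exp_pos _).le ?_
    calc exp 1 * M * x = exp (-1) * (exp 2 * (M * x)) := by
          rw [← mul_assoc, ← exp_add]; norm_num; ring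
      _ ≤ exp (-1) * t := by
          gcongr
          exact (mul_le_mul_of_nonneg_left hMx (exp_pos 2).le).trans ht
  calc randSet n (x ^ ((1 : ℝ) / ↑(k + 1))) {ω | t ≤ Ystar n (k + 1) j ω}
      ≤ M.choose t * ENNReal.ofReal (x ^ ((1 : ℝ) / ↑(k + 1))) ^ (t * (k + 1)) :=
        randSet_le_Ystar_le_choose_mul n (k + 1) j t _
    _ = ENNReal.ofReal (M.choose t * x ^ t) := by
        rw [pow_mul', ← ENNReal.ofReal_pow (by positivity), hpk, ← ENNReal.ofReal_pow hx,
          ← ENNReal.ofReal_natCast, ← ENNReal.ofReal_mul (by positivity)]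
    _ ≤ ENNReal.ofReal ((exp 1 * M * x / t) ^ t) :=
        ENNReal.ofReal_le_ofReal (Nat.choose_mul_pow_le M t hx)
    _ ≤ ENNReal.ofReal (exp (-1) ^ t) := by gcongr
    _ = ENNReal.ofReal (exp (-t)) := by rw [← exp_nat_mul]; ring_nf

theorem Ystar_upper_tail_general (k : ℕ) (hk : 3 ≤ k) (α ε : ℝ)
    (hα0 : 0 < α) (hε : 0 < ε) :
    ∃ δ : ℝ, 0 < δ ∧ ∃ N : ℕ,
      ∀ n : ℕ, N ≤ n → ∀ j : ℕ, α * n ≤ (j : ℝ) → (j : ℝ) ≤ ((k : ℝ) - α) * n →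
        randSet n (((4 + ε) * (k.factorial : ℝ) ^ 2 / α ^ (k - 1) * Real.log n /
              (n : ℝ) ^ (k - 1)) ^ ((1 : ℝ) / k))
            {ω | δ * Real.log n ≤ (Ystar n k j ω : ℝ)} ≤
          ENNReal.ofReal (2 * (n : ℝ) ^ (-(5 : ℝ) / 4)) := by
  set K := (4 + ε) * (k.factorial : ℝ) ^ 2 / α ^ (k - 1)
  have hK : 0 ≤ K := by positivity
  set C := exp 2 * (2 ^ (k - 1) * K)
  have hC : 0 ≤ C := by positivity
  refine ⟨C + 5 / 4, by positivity, 1, fun n hn j _ _ => ?_⟩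
  have hL : 0 ≤ log n := log_natCast_nonneg n
  set t := ⌈(C + 5 / 4) * log (n : ℝ)⌉₊
  have hδt : (C + 5 / 4) * log n ≤ t := Nat.le_ceil _
  have hevent : {ω | (C + 5 / 4) * log n ≤ (Ystar n k j ω : ℝ)} = {ω | t ≤ Ystar n k j ω} :=
    Set.ext fun ω => (Nat.ceil_le (α := ℝ)).symm
  rw [hevent]
  refine (randSet_le_Ystar_le_exp_neg hn (by omega) hK j (by nlinarith)).trans
    (ENNReal.ofReal_le_ofReal ?_)
  calc exp (-t) ≤ exp (-((C + 5 / 4) * log n)) := by gcongr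
    _ = (n : ℝ) ^ (-(C + 5 / 4)) := by
        rw [rpow_def_of_pos (by exact_mod_cast hn)]; ring_nf
    _ ≤ (n : ℝ) ^ (-(5 : ℝ) / 4) :=
        rpow_le_rpow_of_exponent_le (by exact_mod_cast hn) (by linarith)
    _ ≤ 2 * (n : ℝ) ^ (-(5 : ℝ) / 4) := by
        linarith [rpow_nonneg (n.cast_nonneg (α := ℝ)) (-(5 : ℝ) / 4)]

/-- Theorem 3.7, uniform form. In the setting of Theorem 3.1, there are
a constant `δ > 0` and `N` such that for all `n ≥ N` and all `j ∈ [αn, (k-α)n]`,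
`P(Y*_{k,n}(j) ≥ δ·log n) ≤ 2·n^{-5/4}`. -/
theorem Ystar_upper_tail (k : ℕ) (hk : 3 ≤ k) (α ε : ℝ)
    (hα0 : 0 < α) (hα1 : α < 1) (hε : 0 < ε) :
    ∃ δ : ℝ, 0 < δ ∧ ∃ N : ℕ,
      ∀ n : ℕ, N ≤ n → ∀ j : ℕ, α * n ≤ (j : ℝ) → (j : ℝ) ≤ ((k : ℝ) - α) * n →
        randSet n (((4 + ε) * (k.factorial : ℝ) ^ 2 / α ^ (k - 1) * Real.log n /
              (n : ℝ) ^ (k - 1)) ^ ((1 : ℝ) / k))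
            {ω | δ * Real.log n ≤ (Ystar n k j ω : ℝ)} ≤
          ENNReal.ofReal (2 * (n : ℝ) ^ (-(5 : ℝ) / 4)) :=
  Ystar_upper_tail_general k hk α ε hα0 hε
end

section
/- Fix an integer k ≥ 2 and α ∈ (0,1). Let ρ_{k,n}(j) denote the number of k-element subsets of {0,1,…,n} whose (pairwise distinct) elements sum to j. Then for every ε > 0 there exists N ∈ ℕ such that for all n ≥ N and every integer j with α·n ≤ j ≤ (k−α)·n, ρ_{k,n}(j) ≥ (1−ε)·(α·n)^{k−1}/(k!·(k−1)!); moreover ρ_{k,n}(j) ≤ (n+1)^{k−1} for all n and j. -/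
open MeasureTheory Filter
open scoped ENNReal

/-- `ρ n k j` : the number of `k`-element subsets of `{0, 1, …, n}` whose (pairwise
distinct) elements sum to `j`; this is `Y` evaluated at the full set. -/
def rho (n k j : ℕ) : ℕ := Y n k j (fun _ => true)

/-!
Count ordered tuples instead of sets. The number `T(t)` of tuples in `{0, …, n}^k` with sum
`t` is the coefficient of `x^t` in `(1 + x + ⋯ + x^n)^k`, hence symmetric about `kn/2` and unimodal.
Every `k`-set with sum `j` arises from exactly `k!` tuples, and the tuples with sum `j` and a
repeated entry number at most `k²(n+1)^(k-2)`, so `T(j) ≤ k! ρ(j) + k²(n+1)^(k-2)`. For `αn ≤ j ≤ (k-α)n`,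
unimodality gives `T(j) ≥ T(⌈αn⌉) = C(⌈αn⌉+k-1, k-1) ≥ ⌈αn⌉^(k-1)/(k-1)!`.
For the upper bound, a `k`-set with sum `j` is determined by its `k - 1` largest elements.
-/

open Finset

def tupleSumCount (k n t : ℕ) : ℕ :=
  #{a : Fin k → Fin (n + 1) | ∑ i, (a i : ℕ) = t}

lemma sum_rev_add_sum {k n : ℕ} (a : Fin k → Fin (n + 1)) :
    ∑ i, ((a i).rev : ℕ) + ∑ i, (a i : ℕ) = k * n := by
  rw [← sum_add_distrib]
  simp [Fin.val_rev, Nat.sub_add_cancel (Nat.lt_succ_iff.mp (a _).isLt)]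

lemma tupleSumCount_symm {k n t : ℕ} (ht : t ≤ k * n) :
    tupleSumCount k n t = tupleSumCount k n (k * n - t) :=
  card_equiv (Equiv.piCongrRight fun _ => Fin.revPerm) fun a => by
    have := sum_rev_add_sum a
    simp only [mem_filter, mem_univ, true_and, Equiv.piCongrRight_apply, Pi.map_apply,
      Fin.revPerm_apply]
    omega

lemma tupleSumCount_succ (k n t : ℕ) :
    tupleSumCount (k + 1) n t = ∑ s ∈ Icc (t - n) t, tupleSumCount k n s := by
  have hsum (a : Fin (k + 1) → Fin (n + 1)) :
      ∑ i, (a i : ℕ) = a 0 + ∑ i, (Fin.tail a i : ℕ) := Fin.sum_univ_succ _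
  rw [tupleSumCount, card_eq_sum_card_fiberwise (f := fun a => ∑ i, (Fin.tail a i : ℕ))
    (t := Icc (t - n) t)]
  · refine sum_congr rfl fun s hs => ?_
    rw [mem_Icc] at hs
    refine card_nbij' Fin.tail (fun b => Fin.cons (⟨t - s, by omega⟩ : Fin (n + 1)) b)
      ?_ ?_ ?_ ?_
    · intro a ha
      simpa using (mem_filter.mp ha).2
    · intro b hb
      simp_all [Fin.tail_cons]
    · intro a ha
      simp only [coe_filter, mem_filter, mem_univ, true_and, hsum] at ha
      obtain ⟨ha, rfl⟩ := ha
      funext i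
      refine Fin.cases ?_ (fun i => ?_) i
      · ext
        simp only [Fin.cons_zero]
        omega
      · simp [Fin.tail]
    · exact fun b _ => Fin.tail_cons _ _
  · intro a ha
    replace ha : (a 0 : ℕ) + ∑ i, (Fin.tail a i : ℕ) = t := by simpa [hsum] using ha
    simp only [coe_Icc, Set.mem_Icc]
    have := (a 0).is_le
    omega

lemma tupleSumCount_le_succ_of_mono {k n t : ℕ}
    (hmono : ∀ s t, s ≤ t → s + t ≤ k * n → tupleSumCount k n s ≤ tupleSumCount k n t)
    (ht : 2 * t + 1 ≤ (k + 1) * n) :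
    tupleSumCount (k + 1) n t ≤ tupleSumCount (k + 1) n (t + 1) := by
  rw [tupleSumCount_succ, tupleSumCount_succ]
  -- from `t` to `t + 1` the window `Icc (t - n) t` trades `t - n` for `t + 1`,
  -- and `(t - n) + (t + 1) ≤ k * n`
  rcases Nat.lt_or_ge t n with htn | hnt
  · rw [Nat.sub_eq_zero_of_le htn.le, Nat.sub_eq_zero_of_le htn]
    exact sum_le_sum_of_subset (Icc_subset_Icc le_rfl t.le_succ)
  · have hlow : t + 1 - n = t - n + 1 := by omega
    rw [hlow, sum_Icc_succ_top (by omega), Icc_add_one_left_eq_Ioc,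
      ← add_sum_Ioc_eq_sum_Icc (show t - n ≤ t by omega), add_comm]
    exact Nat.add_le_add_left (hmono _ _ (by omega) (by rw [add_mul] at ht; omega)) _

lemma tupleSumCount_mono_of_le_succ {k n : ℕ}
    (hstep : ∀ t, 2 * t + 1 ≤ k * n → tupleSumCount k n t ≤ tupleSumCount k n (t + 1))
    {s t : ℕ} (hst : s ≤ t) (hsum : s + t ≤ k * n) :
    tupleSumCount k n s ≤ tupleSumCount k n t := by
  have hmono : MonotoneOn (tupleSumCount k n) (Set.Iic (k * n / 2)) :=
    monotoneOn_of_le_succ Set.ordConnected_Iic fun a _ _ ha => by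
      rw [Order.succ_eq_add_one, Set.mem_Iic] at ha
      exact hstep a (by omega)
  have hIic {x : ℕ} (hx : 2 * x ≤ k * n) : x ∈ Set.Iic (k * n / 2) := Set.mem_Iic.mpr (by omega)
  rcases le_or_gt (2 * t) (k * n) with ht | ht
  · exact hmono (hIic (by omega)) (hIic ht) hst
  · rw [tupleSumCount_symm (by omega : t ≤ k * n)]
    exact hmono (hIic (by omega)) (hIic (by omega)) (by omega)

lemma tupleSumCount_mono {k n s t : ℕ} (hst : s ≤ t) (hsum : s + t ≤ k * n) :
    tupleSumCount k n s ≤ tupleSumCount k n t := by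
  induction k generalizing s t with
  | zero =>
    obtain ⟨rfl, rfl⟩ : s = 0 ∧ t = 0 := by simpa using hsum
    rfl
  | succ k ih =>
    exact tupleSumCount_mono_of_le_succ
      (fun _ => tupleSumCount_le_succ_of_mono fun _ _ => ih) hst hsum

lemma tupleSumCount_one {n m : ℕ} (hm : m ≤ n) : tupleSumCount 1 n m = 1 := by
  rw [tupleSumCount, card_eq_one]
  refine ⟨fun _ => ⟨m, by omega⟩, ?_⟩
  ext a
  simp only [mem_filter, mem_univ, true_and, mem_singleton, Fin.sum_univ_one]
  exact ⟨fun ha => funext fun i => Fin.ext (by rw [Subsingleton.elim i 0, ha]),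
    fun ha => by rw [ha]⟩

lemma tupleSumCount_eq_choose (k : ℕ) {n m : ℕ} (hm : m ≤ n) :
    tupleSumCount (k + 1) n m = (m + k).choose k := by
  induction k generalizing m with
  | zero => simpa using tupleSumCount_one hm
  | succ k ih =>
    rw [tupleSumCount_succ, Nat.sub_eq_zero_of_le hm, ← Nat.range_succ_eq_Icc_zero,
      sum_congr rfl fun s hs => ih ((Nat.lt_succ_iff.mp (mem_range.mp hs)).trans hm),
      Nat.sum_range_add_choose, add_assoc]

lemma pow_le_factorial_mul_tupleSumCount (k : ℕ) {n m : ℕ} (hm : m ≤ n) :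
    m ^ k ≤ k.factorial * tupleSumCount (k + 1) n m := by
  rw [tupleSumCount_eq_choose k hm, ← Nat.descFactorial_eq_factorial_mul_choose]
  calc m ^ k ≤ (m + k + 1 - k) ^ k := Nat.pow_le_pow_left (by omega) k
    _ ≤ (m + k).descFactorial k := Nat.pow_sub_le_descFactorial _ _

open scoped Classical in
lemma card_injective_tuples_le (k n j : ℕ) :
    #{a : Fin k → Fin (n + 1) | ∑ i, (a i : ℕ) = j ∧ Function.Injective a} ≤
      k.factorial * rho n k j := by
  refine card_le_mul_card_image_of_maps_to (f := fun a => univ.image a)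
    (t := repFinsets n k j fun _ => true) (fun a ha => ?_) _ fun S hS => ?_
  · simp only [mem_filter, mem_univ, true_and] at ha
    simp only [repFinsets, mem_filter, mem_univ, true_and, and_true, implies_true]
    rw [card_image_of_injective _ ha.2, card_univ, Fintype.card_fin, sum_image ha.2.injOn]
    exact ⟨rfl, ha.1⟩
  · have hS : #S = k := (mem_filter.mp hS).2.1
    calc _ ≤ #((univ : Finset (Fin k ↪ S)).image fun e i => (e i : Fin (n + 1))) :=
          card_le_card fun a ha => ?_
      _ ≤ Fintype.card (Fin k ↪ S) := card_image_le
      _ = k.factorial := by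
        rw [Fintype.card_embedding_eq, Fintype.card_coe, hS, Fintype.card_fin,
          Nat.descFactorial_self]
    simp only [mem_filter, mem_univ, true_and] at ha
    obtain ⟨⟨-, hinj⟩, rfl⟩ := ha
    exact mem_image.mpr ⟨⟨fun i => ⟨a i, mem_image_of_mem a (mem_univ i)⟩,
      fun i i' h => hinj (congrArg Subtype.val h)⟩, mem_univ _, rfl⟩

lemma card_tuples_eq_at_le {k n j : ℕ} {i l : Fin k} (hil : i ≠ l) :
    #{a : Fin k → Fin (n + 1) | ∑ x, (a x : ℕ) = j ∧ a i = a l} ≤ (n + 1) ^ (k - 2) := by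
  set P : Finset (Fin k) := {i, l}
  have hsum (a : Fin k → Fin (n + 1)) (ha : a i = a l) :
      ∑ x ∈ Pᶜ, (a x : ℕ) + 2 * a i = ∑ x, (a x : ℕ) := by
    rw [← sum_compl_add_sum P, sum_pair hil, ha, two_mul]
  calc _ ≤ #(univ : Finset (↥Pᶜ → Fin (n + 1))) :=
        card_le_card_of_injOn (fun a x => a x) (fun _ _ => mem_univ _) ?_
    _ = (n + 1) ^ (k - 2) := by
      rw [card_univ, Fintype.card_fun, Fintype.card_coe, card_compl, card_pair hil,
        Fintype.card_fin, Fintype.card_fin]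
  intro a ha b hb hab
  simp only [mem_coe, mem_filter, mem_univ, true_and] at ha hb
  have hcompl : ∀ x ∈ Pᶜ, a x = b x := fun x hx => congrFun hab ⟨x, hx⟩
  have hi : a i = b i := by
    have := hsum a ha.2
    rw [sum_congr rfl fun x hx => congrArg Fin.val (hcompl x hx), ha.1, ← hb.1,
      ← hsum b hb.2] at this
    exact Fin.ext (by omega)
  funext x
  by_cases hx : x ∈ P
  · rcases mem_insert.mp hx with rfl | hx
    · exact hi
    · rw [mem_singleton.mp hx, ← ha.2, ← hb.2, hi]
  · exact hcompl x (mem_compl.mpr hx)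

open scoped Classical in
lemma card_not_injective_tuples_le (k n j : ℕ) :
    #{a : Fin k → Fin (n + 1) | ∑ i, (a i : ℕ) = j ∧ ¬ Function.Injective a} ≤
      k * k * (n + 1) ^ (k - 2) := by
  calc _ ≤ #((univ : Finset (Fin k)).offDiag.biUnion fun p =>
          {a : Fin k → Fin (n + 1) | ∑ i, (a i : ℕ) = j ∧ a p.1 = a p.2}) :=
        card_le_card fun a ha => ?_
    _ ≤ #(univ : Finset (Fin k)).offDiag * (n + 1) ^ (k - 2) :=
        card_biUnion_le_card_mul _ _ _ fun p hp => card_tuples_eq_at_le (mem_offDiag.mp hp).2.2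
    _ ≤ k * k * (n + 1) ^ (k - 2) := by
        gcongr
        simp [offDiag_card]
  simp only [mem_filter, mem_univ, true_and] at ha
  obtain ⟨x, y, hxy, hne⟩ := Function.not_injective_iff.mp ha.2
  exact mem_biUnion.mpr ⟨(x, y), by simp [hne], by simp [ha.1, hxy]⟩

lemma tupleSumCount_le (k n j : ℕ) :
    tupleSumCount k n j ≤ k.factorial * rho n k j + k * k * (n + 1) ^ (k - 2) := by
  classical
  rw [tupleSumCount, ← card_filter_add_card_filter_not Function.Injective, filter_filter,
    filter_filter]
  exact add_le_add (card_injective_tuples_le k n j) (card_not_injective_tuples_le k n j)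

lemma eq_of_erase_eq_of_sum_eq_s12 {α M : Type*} [DecidableEq α] [AddCancelCommMonoid M]
    {f : α → M} (hf : Function.Injective f) {S T : Finset α} {x y : α} (hx : x ∈ S) (hy : y ∈ T)
    (herase : S.erase x = T.erase y) (hsum : ∑ i ∈ S, f i = ∑ i ∈ T, f i) : S = T := by
  rw [← sum_erase_add _ _ hx, ← sum_erase_add _ _ hy, herase] at hsum
  rw [← insert_erase hx, ← insert_erase hy, herase, hf (add_left_cancel hsum)]

lemma rho_le_choose {k : ℕ} (hk : 1 ≤ k) (n j : ℕ) : rho n k j ≤ (n + 1).choose (k - 1) := by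
  have hne (S) (hS : S ∈ repFinsets n k j fun _ => true) : S.Nonempty :=
    card_pos.mp ((mem_filter.mp hS).2.1 ▸ hk)
  calc rho n k j = #(repFinsets n k j fun _ => true) := rfl
    _ ≤ #(powersetCard (k - 1) (univ : Finset (Fin (n + 1)))) :=
        card_le_card_of_injOn
          (fun S : Finset (Fin (n + 1)) => if h : S.Nonempty then S.erase (S.min' h) else ∅)
          ?maps ?inj
    _ = (n + 1).choose (k - 1) := by rw [card_powersetCard, card_univ, Fintype.card_fin]
  case maps =>
    intro S hS
    dsimp only
    rw [mem_coe, dif_pos (hne S hS), mem_powersetCard, card_erase_of_mem (min'_mem _ _),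
      (mem_filter.mp hS).2.1]
    exact ⟨subset_univ _, rfl⟩
  case inj =>
    intro S hS T hT hST
    simp only [dif_pos (hne S hS), dif_pos (hne T hT)] at hST
    exact eq_of_erase_eq_of_sum_eq_s12 Fin.val_injective (min'_mem _ _) (min'_mem _ _) hST
      ((mem_filter.mp hS).2.2.1.trans (mem_filter.mp hT).2.2.1.symm)

lemma pow_le_factorial_mul_rho {k n m j : ℕ} (hk : 1 ≤ k) (hmn : m ≤ n) (hmj : m ≤ j)
    (hmjk : m + j ≤ k * n) :
    m ^ (k - 1) ≤ (k - 1).factorial * (k.factorial * rho n k j + k * k * (n + 1) ^ (k - 2)) := by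
  obtain ⟨k, rfl⟩ := Nat.exists_eq_add_of_le' hk
  calc m ^ k ≤ k.factorial * tupleSumCount (k + 1) n m :=
        pow_le_factorial_mul_tupleSumCount k hmn
    _ ≤ k.factorial * tupleSumCount (k + 1) n j :=
        Nat.mul_le_mul_left _ (tupleSumCount_mono hmj hmjk)
    _ ≤ _ := Nat.mul_le_mul_left _ (tupleSumCount_le _ n j)

lemma exists_mul_add_one_pow_le {C : ℝ} (hC : 0 ≤ C) {ε β : ℝ} (hε : 0 < ε) (hβ : 0 < β)
    (d : ℕ) : ∃ N : ℕ, ∀ n : ℕ, N ≤ n → C * ((n : ℝ) + 1) ^ d ≤ ε * (β * n) ^ (d + 1) := by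
  obtain ⟨N, hN⟩ := exists_nat_ge (C * 2 ^ d / (ε * β ^ (d + 1)))
  refine ⟨max N 1, fun n hn => ?_⟩
  have hn1 : (1 : ℝ) ≤ n := by exact_mod_cast (le_max_right _ _).trans hn
  have hNn : C * 2 ^ d ≤ n * (ε * β ^ (d + 1)) := by
    rw [← div_le_iff₀ (by positivity)]
    exact hN.trans (by exact_mod_cast (le_max_left _ _).trans hn)
  calc C * ((n : ℝ) + 1) ^ d ≤ C * (2 * n) ^ d := by gcongr; linarith
    _ = C * 2 ^ d * n ^ d := by ring
    _ ≤ n * (ε * β ^ (d + 1)) * n ^ d := by gcongr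
    _ = ε * (β * n) ^ (d + 1) := by ring

/-- count of `k`-sums, from \cite{AV}. For fixed `k ≥ 2` and
`α ∈ (0,1)`: for every `ε > 0`, eventually in `n`, every `j ∈ [αn, (k-α)n]` satisfies
`ρ_{k,n}(j) ≥ (1-ε)·(αn)^{k-1}/(k!(k-1)!)`; moreover `ρ_{k,n}(j) ≤ (n+1)^{k-1}` always. -/
theorem rho_bounds (k : ℕ) (hk : 2 ≤ k) (α : ℝ) (hα0 : 0 < α) (hα1 : α < 1) :
    (∀ ε : ℝ, 0 < ε → ∃ N : ℕ, ∀ n : ℕ, N ≤ n →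
      ∀ j : ℕ, α * n ≤ (j : ℝ) → (j : ℝ) ≤ ((k : ℝ) - α) * n →
        (1 - ε) * (α * n) ^ (k - 1) / ((k.factorial : ℝ) * (k - 1).factorial) ≤
          (rho n k j : ℝ)) ∧
    ∀ n j : ℕ, (rho n k j : ℝ) ≤ ((n : ℝ) + 1) ^ (k - 1) := by
  refine ⟨fun ε hε => ?_, fun n j => ?_⟩
  · obtain ⟨N, hN⟩ := exists_mul_add_one_pow_le
      (C := (k - 1).factorial * (k * k)) (by positivity) hε hα0 (k - 2)
    refine ⟨N, fun n hn j hj hj' => ?_⟩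
    have hm : (⌈α * n⌉₊ : ℝ) < α * n + 1 := Nat.ceil_lt_add_one (by positivity)
    have hmn : ⌈α * n⌉₊ ≤ n := Nat.ceil_le.mpr (by nlinarith)
    have hmjk : ⌈α * n⌉₊ + j ≤ k * n := by
      have : ((⌈α * n⌉₊ + j : ℕ) : ℝ) < (k * n + 1 : ℕ) := by push_cast; linarith
      exact Nat.lt_succ_iff.mp (by exact_mod_cast this)
    have hcount : (α * n) ^ (k - 1) ≤ (k - 1).factorial *
        (k.factorial * (rho n k j : ℝ) + k * k * ((n : ℝ) + 1) ^ (k - 2)) :=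
      (pow_le_pow_left₀ (by positivity) (Nat.le_ceil _) _).trans <| by
        exact_mod_cast pow_le_factorial_mul_rho (by omega) hmn (Nat.ceil_le.mpr hj) hmjk
    have herr := hN n hn
    rw [show k - 2 + 1 = k - 1 by omega] at herr
    rw [div_le_iff₀ (by positivity)]
    linarith
  · exact_mod_cast (rho_le_choose (by omega) n j).trans (Nat.choose_le_pow _ _)
end
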